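/- arXiv:0712.2764 — 9 statements merged into one kernel-verified Lean document; each statement's English description precedes it below -/
import Mathlib

section
/- Let A, B, C : ℝ² → ℝ be smooth with A nowhere zero, and let u : ℝ² → ℝ be a smooth solution of u_t = A u_{xx} + B u_x + C u. Let T : ℝ → ℝ and X, U¹, U⁰ : ℝ² → ℝ be smooth with T_t(t)·X_x(t,x)·U¹(t,x) ≠ 0 for all (t,x), and assume the quotient U⁰/U¹ is also a solution of u_t = A u_{xx} + B u_x + C u. Let Ã, B̃, C̃, ũ : ℝ² → ℝ be smooth functions such that for all (t,x): Ã(T(t),X(t,x)) = (X_x²/T_t)·A; B̃(T(t),X(t,x)) = (X_x/T_t)·(B − 2(U¹_x/U¹)A) − (X_t − A X_{xx})/T_t; C̃(T(t),X(t,x)) = −(U¹/T_t)·((1/U¹)_t − A(1/U¹)_{xx} − B(1/U¹)_x − C/U¹); and ũ(T(t),X(t,x)) = U¹(t,x)u(t,x) + U⁰(t,x). Then at every point of the form (t̃,x̃) = (T(t),X(t,x)) the function ũ satisfies ũ_{t̃} = Ã ũ_{x̃x̃} + B̃ ũ_{x̃} + C̃ ũ. -/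
/-- Partial derivative with respect to the first (time) variable. -/
noncomputable def Dt (u : ℝ → ℝ → ℝ) : ℝ → ℝ → ℝ := fun t x => deriv (fun s => u s x) t

/-- Partial derivative with respect to the second (space) variable. -/
noncomputable def Dx (u : ℝ → ℝ → ℝ) : ℝ → ℝ → ℝ := fun t x => deriv (fun y => u t y) x

/-- Smoothness of a function of two real variables. -/
def Smooth2 (u : ℝ → ℝ → ℝ) : Prop := ContDiff ℝ (⊤ : ℕ∞) (fun p : ℝ × ℝ => u p.1 p.2)

lemma Smooth2.sliceX {u : ℝ → ℝ → ℝ} (hu : Smooth2 u) (t : ℝ) : ContDiff ℝ (⊤ : ℕ∞) (fun x => u t x) :=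
  hu.comp (contDiff_const.prodMk contDiff_id)

lemma Smooth2.sliceT {u : ℝ → ℝ → ℝ} (hu : Smooth2 u) (x : ℝ) : ContDiff ℝ (⊤ : ℕ∞) (fun t => u t x) :=
  hu.comp (contDiff_id.prodMk contDiff_const)

lemma Smooth2.diffX {u : ℝ → ℝ → ℝ} (hu : Smooth2 u) (t x : ℝ) :
    DifferentiableAt ℝ (fun y => u t y) x :=
  (hu.sliceX t).differentiable (by simp) x

lemma Smooth2.diffT {u : ℝ → ℝ → ℝ} (hu : Smooth2 u) (t x : ℝ) :
    DifferentiableAt ℝ (fun s => u s x) t :=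
  (hu.sliceT x).differentiable (by simp) t

lemma hasDerivAt_sliceX {u : ℝ → ℝ → ℝ} (hu : Smooth2 u) (t x : ℝ) :
    HasDerivAt (fun y => u t y) (Dx u t x) x := (hu.diffX t x).hasDerivAt

lemma hasDerivAt_sliceT {u : ℝ → ℝ → ℝ} (hu : Smooth2 u) (t x : ℝ) :
    HasDerivAt (fun s => u s x) (Dt u t x) t := (hu.diffT t x).hasDerivAt

lemma Dx_eq_fderiv {u : ℝ → ℝ → ℝ} (hu : Smooth2 u) (t x : ℝ) :
    Dx u t x = fderiv ℝ (fun p : ℝ × ℝ => u p.1 p.2) (t, x) (0, 1) := by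
  have h1 : HasDerivAt (fun y : ℝ => ((t, y) : ℝ × ℝ)) ((0 : ℝ), (1 : ℝ)) x :=
    (hasDerivAt_const x t).prodMk (hasDerivAt_id x)
  exact (((hu.differentiable (by simp) (t, x)).hasFDerivAt).comp_hasDerivAt x h1).deriv

lemma Dt_eq_fderiv {u : ℝ → ℝ → ℝ} (hu : Smooth2 u) (t x : ℝ) :
    Dt u t x = fderiv ℝ (fun p : ℝ × ℝ => u p.1 p.2) (t, x) (1, 0) := by
  have h1 : HasDerivAt (fun s : ℝ => ((s, x) : ℝ × ℝ)) ((1 : ℝ), (0 : ℝ)) t :=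
    (hasDerivAt_id t).prodMk (hasDerivAt_const t x)
  exact (((hu.differentiable (by simp) (t, x)).hasFDerivAt).comp_hasDerivAt t h1).deriv

lemma Smooth2.dx {u : ℝ → ℝ → ℝ} (hu : Smooth2 u) : Smooth2 (Dx u) := by
  have h : (fun p : ℝ × ℝ => Dx u p.1 p.2) =
      fun p : ℝ × ℝ => fderiv ℝ (fun q : ℝ × ℝ => u q.1 q.2) p (0, 1) := by
    funext p; exact Dx_eq_fderiv hu p.1 p.2
  unfold Smooth2; rw [h]
  exact (hu.fderiv_right (le_refl _)).clm_apply contDiff_const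

lemma Smooth2.dt {u : ℝ → ℝ → ℝ} (hu : Smooth2 u) : Smooth2 (Dt u) := by
  have h : (fun p : ℝ × ℝ => Dt u p.1 p.2) =
      fun p : ℝ × ℝ => fderiv ℝ (fun q : ℝ × ℝ => u q.1 q.2) p (1, 0) := by
    funext p; exact Dt_eq_fderiv hu p.1 p.2
  unfold Smooth2; rw [h]
  exact (hu.fderiv_right (le_refl _)).clm_apply contDiff_const

lemma hasDerivAt_comp2 {f : ℝ → ℝ → ℝ} (hf : Smooth2 f) {a b : ℝ → ℝ} {a' b' : ℝ} {s : ℝ}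
    (ha : HasDerivAt a a' s) (hb : HasDerivAt b b' s) :
    HasDerivAt (fun s => f (a s) (b s)) (Dt f (a s) (b s) * a' + Dx f (a s) (b s) * b') s := by
  have h2 : HasDerivAt (fun s => f (a s) (b s))
      (fderiv ℝ (fun p : ℝ × ℝ => f p.1 p.2) (a s, b s) (a', b')) s := by
    have h := ((hf.differentiable (by simp) (a s, b s)).hasFDerivAt).comp_hasDerivAt s (ha.prodMk hb)
    exact h
  convert h2 using 1
  rw [Dt_eq_fderiv hf, Dx_eq_fderiv hf]
  have : ((a', b') : ℝ × ℝ) = a' • ((1:ℝ), (0:ℝ)) + b' • ((0:ℝ), (1:ℝ)) := by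
    simp [Prod.ext_iff]
  rw [this, map_add, map_smul, map_smul]
  simp [mul_comm]

lemma Dx_congr {f g : ℝ → ℝ → ℝ} (t x : ℝ) (h : ∀ y, f t y = g t y) : Dx f t x = Dx g t x := by
  unfold Dx; rw [funext h]

lemma Dt_congr {f g : ℝ → ℝ → ℝ} (t x : ℝ) (h : ∀ s, f s x = g s x) : Dt f t x = Dt g t x := by
  unfold Dt; rw [funext h]


set_option maxHeartbeats 2000000 in
theorem stmt_0 (A B C : ℝ → ℝ → ℝ) (hA : Smooth2 A) (hB : Smooth2 B) (hC : Smooth2 C)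
    (hA0 : ∀ t x, A t x ≠ 0)
    (u : ℝ → ℝ → ℝ) (hu : Smooth2 u)
    (hueq : ∀ t x, Dt u t x = A t x * Dx (Dx u) t x + B t x * Dx u t x + C t x * u t x)
    (T : ℝ → ℝ) (hT : ContDiff ℝ (⊤ : ℕ∞) T)
    (X U1 U0 : ℝ → ℝ → ℝ) (hX : Smooth2 X) (hU1 : Smooth2 U1) (hU0 : Smooth2 U0)
    (hne : ∀ t x, deriv T t * Dx X t x * U1 t x ≠ 0)
    (hquot : ∀ t x, Dt (fun t x => U0 t x / U1 t x) t x =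
      A t x * Dx (Dx (fun t x => U0 t x / U1 t x)) t x +
      B t x * Dx (fun t x => U0 t x / U1 t x) t x + C t x * (U0 t x / U1 t x))
    (At Bt Ct ut : ℝ → ℝ → ℝ)
    (hAt : Smooth2 At) (hBt : Smooth2 Bt) (hCt : Smooth2 Ct) (hut : Smooth2 ut)
    (hAeq : ∀ t x, At (T t) (X t x) = (Dx X t x) ^ 2 / deriv T t * A t x)
    (hBeq : ∀ t x, Bt (T t) (X t x) =
      Dx X t x / deriv T t * (B t x - 2 * (Dx U1 t x / U1 t x) * A t x)
      - (Dt X t x - A t x * Dx (Dx X) t x) / deriv T t)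
    (hCeq : ∀ t x, Ct (T t) (X t x) =
      - (U1 t x / deriv T t) *
        (Dt (fun t x => (U1 t x)⁻¹) t x
          - A t x * Dx (Dx (fun t x => (U1 t x)⁻¹)) t x
          - B t x * Dx (fun t x => (U1 t x)⁻¹) t x
          - C t x / U1 t x))
    (hueqt : ∀ t x, ut (T t) (X t x) = U1 t x * u t x + U0 t x) :
    ∀ t x, Dt ut (T t) (X t x) =
      At (T t) (X t x) * Dx (Dx ut) (T t) (X t x) +
      Bt (T t) (X t x) * Dx ut (T t) (X t x) +
      Ct (T t) (X t x) * ut (T t) (X t x) := by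
  have hU1ne : ∀ t x, U1 t x ≠ 0 := fun t x => (mul_ne_zero_iff.mp (hne t x)).2
  have hXxne : ∀ t x, Dx X t x ≠ 0 := fun t x =>
    (mul_ne_zero_iff.mp (mul_ne_zero_iff.mp (hne t x)).1).2
  have hTne : ∀ t, deriv T t ≠ 0 := fun t =>
    (mul_ne_zero_iff.mp (mul_ne_zero_iff.mp (hne t 0)).1).1
  set w : ℝ → ℝ → ℝ := fun t x => U0 t x / U1 t x with hwdef
  have hwS : Smooth2 w := hU0.div hU1 (fun p => hU1ne p.1 p.2)
  set z : ℝ → ℝ → ℝ := fun t x => u t x + w t x with hzdef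
  have hzS : Smooth2 z := hu.add hwS
  -- z solves the PDE
  have hzx : ∀ t x, Dx z t x = Dx u t x + Dx w t x := fun t x =>
    deriv_add (hu.diffX t x) (hwS.diffX t x)
  have hE3 : ∀ t x, Dt z t x = A t x * Dx (Dx z) t x + B t x * Dx z t x + C t x * z t x := by
    intro t x
    have h1 : Dt z t x = Dt u t x + Dt w t x := deriv_add (hu.diffT t x) (hwS.diffT t x)
    have h3 : Dx (Dx z) t x = Dx (Dx u) t x + Dx (Dx w) t x := by
      rw [Dx_congr (g := fun t y => Dx u t y + Dx w t y) t x (fun y => hzx t y)]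
      exact deriv_add ((hu.dx).diffX t x) ((hwS.dx).diffX t x)
    rw [h1, h3, hzx, hueq, hquot]
    rw [show z t x = u t x + U0 t x / U1 t x from rfl]
    ring
  -- V and its derivatives
  set V : ℝ → ℝ → ℝ := fun a b => U1 a b * u a b + U0 a b with hVdef
  have hVS : Smooth2 V := (hU1.mul hu).add hU0
  have hVz : ∀ a b, V a b = U1 a b * z a b := by
    intro a b
    simp only [hVdef, hzdef, hwdef]
    field_simp [hU1ne a b]
  have hVx : ∀ t x, Dx V t x = Dx U1 t x * z t x + U1 t x * Dx z t x := by
    intro t x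
    rw [Dx_congr (g := fun a b => U1 a b * z a b) t x (fun y => hVz t y)]
    exact deriv_mul (hU1.diffX t x) (hzS.diffX t x)
  have hVt : ∀ t x, Dt V t x = Dt U1 t x * z t x + U1 t x * Dt z t x := by
    intro t x
    rw [Dt_congr (g := fun a b => U1 a b * z a b) t x (fun s => hVz s x)]
    exact deriv_mul (hU1.diffT t x) (hzS.diffT t x)
  have hVxx : ∀ t x, Dx (Dx V) t x =
      Dx (Dx U1) t x * z t x + 2 * Dx U1 t x * Dx z t x + U1 t x * Dx (Dx z) t x := by
    intro t x
    rw [Dx_congr (g := fun a b => Dx U1 a b * z a b + U1 a b * Dx z a b) t x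
      (fun y => hVx t y)]
    have h1 := ((hasDerivAt_sliceX hU1.dx t x).fun_mul (hasDerivAt_sliceX hzS t x)).fun_add
      ((hasDerivAt_sliceX hU1 t x).fun_mul (hasDerivAt_sliceX hzS.dx t x))
    rw [show Dx (fun a b => Dx U1 a b * z a b + U1 a b * Dx z a b) t x
      = deriv (fun y => Dx U1 t y * z t y + U1 t y * Dx z t y) x from rfl, h1.deriv]
    ring
  -- inverse derivatives
  set iU : ℝ → ℝ → ℝ := fun a b => (U1 a b)⁻¹ with hiUdef
  have hiUS : Smooth2 iU := hU1.inv (fun p => hU1ne p.1 p.2)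
  have hI1 : ∀ t x, Dx iU t x = -Dx U1 t x / (U1 t x) ^ 2 := fun t x =>
    deriv_inv'' (hU1.diffX t x) (hU1ne t x)
  have hI3 : ∀ t x, Dt iU t x = -Dt U1 t x / (U1 t x) ^ 2 := fun t x =>
    deriv_inv'' (hU1.diffT t x) (hU1ne t x)
  have hI2 : ∀ t x, Dx (Dx iU) t x =
      -Dx (Dx U1) t x / (U1 t x) ^ 2 + 2 * (Dx U1 t x) ^ 2 / (U1 t x) ^ 3 := by
    intro t x
    rw [Dx_congr (g := fun a b => -Dx U1 a b / (U1 a b) ^ 2) t x (fun y => hI1 t y)]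
    have hnum : DifferentiableAt ℝ (fun y => -Dx U1 t y) x := (hU1.dx.diffX t x).neg
    have hden : DifferentiableAt ℝ (fun y => (U1 t y) ^ 2) x := (hU1.diffX t x).pow 2
    have h := deriv_fun_div hnum hden (pow_ne_zero 2 (hU1ne t x))
    rw [show Dx (fun a b => -Dx U1 a b / (U1 a b) ^ 2) t x
      = deriv (fun y => -Dx U1 t y / (U1 t y) ^ 2) x from rfl, h,
      deriv.fun_neg, deriv_fun_pow (hU1.diffX t x) 2]
    have : deriv (fun y => Dx U1 t y) x = Dx (Dx U1) t x := rfl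
    rw [this]
    have : deriv (fun y => U1 t y) x = Dx U1 t x := rfl
    rw [this]
    field_simp [hU1ne t x]
    ring
  intro t x
  -- chain rule facts
  have hCR1 : ∀ y, Dx ut (T t) (X t y) * Dx X t y = Dx V t y := by
    intro y
    have h1 : HasDerivAt (fun y' => ut (T t) (X t y'))
        (Dx ut (T t) (X t y) * Dx X t y) y :=
      (hasDerivAt_sliceX hut (T t) (X t y)).comp y (hasDerivAt_sliceX hX t y)
    have h2 : (fun y' => ut (T t) (X t y')) = fun y' => V t y' :=
      funext fun y' => hueqt t y'
    rw [h2] at h1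
    exact h1.deriv.symm
  have hCR2 : Dx (Dx ut) (T t) (X t x) * (Dx X t x) ^ 2
      + Dx ut (T t) (X t x) * Dx (Dx X) t x = Dx (Dx V) t x := by
    have h1 : HasDerivAt (fun y => Dx ut (T t) (X t y))
        (Dx (Dx ut) (T t) (X t x) * Dx X t x) x :=
      (hasDerivAt_sliceX hut.dx (T t) (X t x)).comp x (hasDerivAt_sliceX hX t x)
    have h2 := h1.fun_mul (hasDerivAt_sliceX hX.dx t x)
    have h3 : (fun y => Dx ut (T t) (X t y) * Dx X t y) = fun y => Dx V t y :=
      funext fun y => hCR1 y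
    rw [h3] at h2
    have := h2.deriv
    rw [show deriv (fun y => Dx V t y) x = Dx (Dx V) t x from rfl] at this
    rw [this]; ring
  have hCR3 : Dt ut (T t) (X t x) * deriv T t + Dx ut (T t) (X t x) * Dt X t x
      = Dt V t x := by
    have ha : HasDerivAt T (deriv T t) t := ((hT.differentiable (by simp)) t).hasDerivAt
    have hb : HasDerivAt (fun s => X s x) (Dt X t x) t := hasDerivAt_sliceT hX t x
    have h1 := hasDerivAt_comp2 hut ha hb
    have h2 : (fun s => ut (T s) (X s x)) = fun s => V s x := funext fun s => hueqt s x
    rw [h2] at h1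
    exact h1.deriv.symm
  -- division-free forms of the coefficient relations
  have hA2 : At (T t) (X t x) * deriv T t = Dx X t x ^ 2 * A t x := by
    rw [hAeq t x]; field_simp [hTne t]
  have hB2 : Bt (T t) (X t x) * deriv T t * U1 t x =
      Dx X t x * (B t x * U1 t x - 2 * Dx U1 t x * A t x)
        - (Dt X t x - A t x * Dx (Dx X) t x) * U1 t x := by
    rw [hBeq t x]; field_simp [hTne t, hU1ne t x]
  have hC2 : Ct (T t) (X t x) * deriv T t * U1 t x ^ 2 =
      U1 t x * Dt U1 t x - A t x * U1 t x * Dx (Dx U1) t x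
        + 2 * A t x * Dx U1 t x ^ 2 - B t x * U1 t x * Dx U1 t x + C t x * U1 t x ^ 2 := by
    rw [hCeq t x, hI1 t x, hI2 t x, hI3 t x]
    field_simp [hTne t, hU1ne t x]
    ring
  have hut2 : ut (T t) (X t x) = U1 t x * z t x := by
    rw [hueqt t x, show U1 t x * u t x + U0 t x = V t x from rfl, hVz t x]
  have hM : deriv T t * U1 t x * Dx X t x ^ 2 ≠ 0 :=
    mul_ne_zero (mul_ne_zero (hTne t) (hU1ne t x)) (pow_ne_zero 2 (hXxne t x))
  rw [hut2]
  refine mul_right_cancel₀ hM ?_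
  linear_combination (Dx X t x ^ 2 * U1 t x) * hCR3
    - (Dx (Dx ut) (T t) (X t x) * Dx X t x ^ 2 * U1 t x) * hA2
    - (Dx ut (T t) (X t x) * Dx X t x ^ 2) * hB2
    - (Dx X t x ^ 2 * z t x) * hC2
    - (Dx X t x ^ 2 * U1 t x * A t x) * hCR2
    + (Dx X t x ^ 2 * U1 t x) * (hVt t x)
    - (Dx X t x ^ 2 * U1 t x * A t x) * (hVxx t x)
    + ((2 * Dx U1 t x * A t x - U1 t x * B t x) * Dx X t x ^ 2) * (hCR1 x)
    + (Dx X t x ^ 2 * U1 t x ^ 2) * (hE3 t x)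
    + ((2 * Dx U1 t x * A t x - U1 t x * B t x) * Dx X t x ^ 2) * (hVx t x)
end

section
/- Let A, B, C : ℝ² → ℝ be smooth, let v¹, v², v³ be smooth solutions of v_t = A v_{xx} + B v_x + C v with v¹ nowhere zero, set W := v¹v²_x − v¹_xv², and let φ : ℝ → ℝ be twice continuously differentiable. Then the function u(t,x) := v¹(t,x)·φ(v²(t,x)/v¹(t,x)) + v³(t,x) satisfies u_t − Au_{xx} − Bu_x − Cu = −A·(W²/(v¹)³)·φ''(v²/v¹). In particular, if φ'' = 0 identically then u is a solution of u_t = Au_{xx} + Bu_x + Cu. -/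
lemma my_deriv_diff (f : ℝ → ℝ) (hf : ContDiff ℝ (⊤ : ℕ∞) f) : Differentiable ℝ (deriv f) := by
  have h : ContDiff ℝ (↑(⊤:ℕ∞)) f := hf.of_le (by simp)
  exact ((contDiff_infty_iff_deriv.mp h).2).differentiable (by simp)

lemma my_phi_deriv_diff (φ : ℝ → ℝ) (hφ : ContDiff ℝ 2 φ) : Differentiable ℝ (deriv φ) := by
  have h : ContDiff ℝ ((1:ℕ∞)+1) φ := by exact_mod_cast hφ
  exact (contDiff_succ_iff_deriv.mp h).2.2.differentiable (by simp)

lemma slice_x (v : ℝ → ℝ → ℝ) (hv : Smooth2 v) (t : ℝ) : ContDiff ℝ (⊤ : ℕ∞) (fun x => v t x) :=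
  hv.comp (contDiff_const.prodMk contDiff_id)

lemma slice_t (v : ℝ → ℝ → ℝ) (hv : Smooth2 v) (x : ℝ) : ContDiff ℝ (⊤ : ℕ∞) (fun t => v t x) :=
  hv.comp (contDiff_id.prodMk contDiff_const)

lemma L1 (φ f1 f2 f3 : ℝ → ℝ) (hφ : Differentiable ℝ φ)
    (hf1 : Differentiable ℝ f1) (hf2 : Differentiable ℝ f2) (hf3 : Differentiable ℝ f3)
    (h0 : ∀ x, f1 x ≠ 0) (x : ℝ) :
    HasDerivAt (fun y => f1 y * φ (f2 y / f1 y) + f3 y)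
      (deriv f1 x * φ (f2 x / f1 x) +
        f1 x * (deriv φ (f2 x / f1 x) *
          ((deriv f2 x * f1 x - f2 x * deriv f1 x) / f1 x ^ 2)) + deriv f3 x) x := by
  have h1 := (hf1 x).hasDerivAt
  have h2 := (hf2 x).hasDerivAt
  have h3 := (hf3 x).hasDerivAt
  have hω : HasDerivAt (fun y => f2 y / f1 y)
      ((deriv f2 x * f1 x - f2 x * deriv f1 x) / f1 x ^ 2) x := h2.div h1 (h0 x)
  have hφ' : HasDerivAt φ (deriv φ (f2 x / f1 x)) (f2 x / f1 x) :=
    (hφ (f2 x / f1 x)).hasDerivAt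
  exact (h1.mul (hφ'.comp x hω)).add h3

lemma L1d (φ f1 f2 f3 : ℝ → ℝ) (hφ : Differentiable ℝ φ)
    (hf1 : Differentiable ℝ f1) (hf2 : Differentiable ℝ f2) (hf3 : Differentiable ℝ f3)
    (h0 : ∀ x, f1 x ≠ 0) :
    deriv (fun y => f1 y * φ (f2 y / f1 y) + f3 y) =
      fun x => deriv f1 x * φ (f2 x / f1 x) +
        f1 x * (deriv φ (f2 x / f1 x) *
          ((deriv f2 x * f1 x - f2 x * deriv f1 x) / f1 x ^ 2)) + deriv f3 x :=
  funext fun x => (L1 φ f1 f2 f3 hφ hf1 hf2 hf3 h0 x).deriv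

lemma L2 (φ f1 f2 f3 : ℝ → ℝ) (hφ : ContDiff ℝ 2 φ)
    (hf1 : ContDiff ℝ (⊤ : ℕ∞) f1) (hf2 : ContDiff ℝ (⊤ : ℕ∞) f2) (hf3 : ContDiff ℝ (⊤ : ℕ∞) f3)
    (h0 : ∀ x, f1 x ≠ 0) (x : ℝ) :
    deriv (deriv (fun y => f1 y * φ (f2 y / f1 y) + f3 y)) x =
      deriv (deriv f1) x * φ (f2 x / f1 x)
      + 2 * deriv f1 x * (deriv φ (f2 x / f1 x) *
          ((deriv f2 x * f1 x - f2 x * deriv f1 x) / f1 x ^ 2))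
      + f1 x * (deriv (deriv φ) (f2 x / f1 x) *
          ((deriv f2 x * f1 x - f2 x * deriv f1 x) / f1 x ^ 2) ^ 2)
      + f1 x * (deriv φ (f2 x / f1 x) *
          (((deriv (deriv f2) x * f1 x - f2 x * deriv (deriv f1) x) * f1 x
            - 2 * deriv f1 x * (deriv f2 x * f1 x - f2 x * deriv f1 x)) / f1 x ^ 3))
      + deriv (deriv f3) x := by
  have hφd : Differentiable ℝ φ := hφ.differentiable two_ne_zero
  have hφ'd : Differentiable ℝ (deriv φ) := my_phi_deriv_diff φ hφ
  have hf1d : Differentiable ℝ f1 := hf1.differentiable (by simp)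
  have hf2d : Differentiable ℝ f2 := hf2.differentiable (by simp)
  have hf3d : Differentiable ℝ f3 := hf3.differentiable (by simp)
  have hb1 : Differentiable ℝ (deriv f1) := my_deriv_diff f1 hf1
  have hb2 : Differentiable ℝ (deriv f2) := my_deriv_diff f2 hf2
  have hb3 : Differentiable ℝ (deriv f3) := my_deriv_diff f3 hf3
  rw [L1d φ f1 f2 f3 hφd hf1d hf2d hf3d h0]
  -- pointwise HasDerivAt pieces
  have h1 := (hf1d x).hasDerivAt
  have h2 := (hf2d x).hasDerivAt
  have hd1 := (hb1 x).hasDerivAt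
  have hd2 := (hb2 x).hasDerivAt
  have hd3 := (hb3 x).hasDerivAt
  have hω : HasDerivAt (fun y => f2 y / f1 y)
      ((deriv f2 x * f1 x - f2 x * deriv f1 x) / f1 x ^ 2) x := h2.div h1 (h0 x)
  have hφω : HasDerivAt (fun y => φ (f2 y / f1 y))
      (deriv φ (f2 x / f1 x) * ((deriv f2 x * f1 x - f2 x * deriv f1 x) / f1 x ^ 2)) x :=
    ((hφd (f2 x / f1 x)).hasDerivAt).comp x hω
  have hφ'ω : HasDerivAt (fun y => deriv φ (f2 y / f1 y))
      (deriv (deriv φ) (f2 x / f1 x) * ((deriv f2 x * f1 x - f2 x * deriv f1 x) / f1 x ^ 2)) x :=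
    HasDerivAt.comp (h₂ := deriv φ) x ((hφ'd (f2 x / f1 x)).hasDerivAt) hω
  have hN : HasDerivAt (fun y => deriv f2 y * f1 y - f2 y * deriv f1 y)
      ((deriv (deriv f2) x * f1 x + deriv f2 x * deriv f1 x)
        - (deriv f2 x * deriv f1 x + f2 x * deriv (deriv f1) x)) x :=
    (hd2.mul h1).sub (h2.mul hd1)
  have hD := h1.pow 2
  have hq := hN.div hD (pow_ne_zero 2 (h0 x))
  have big := ((hd1.mul hφω).add (h1.mul (hφ'ω.mul hq))).add hd3
  rw [(show HasDerivAt (fun x => deriv f1 x * φ (f2 x / f1 x) + f1 x * (deriv φ (f2 x / f1 x) * ((deriv f2 x * f1 x - f2 x * deriv f1 x) / f1 x ^ 2)) + deriv f3 x) _ x from big).deriv]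
  have h0x := h0 x
  simp only [Pi.mul_apply, Pi.div_apply, Pi.pow_apply]
  field_simp
  ring

theorem stmt_5 (A B C : ℝ → ℝ → ℝ) (hA : Smooth2 A) (hB : Smooth2 B) (hC : Smooth2 C)
    (v1 v2 v3 : ℝ → ℝ → ℝ) (hv1 : Smooth2 v1) (hv2 : Smooth2 v2) (hv3 : Smooth2 v3)
    (hv1sol : ∀ t x, Dt v1 t x = A t x * Dx (Dx v1) t x + B t x * Dx v1 t x + C t x * v1 t x)
    (hv2sol : ∀ t x, Dt v2 t x = A t x * Dx (Dx v2) t x + B t x * Dx v2 t x + C t x * v2 t x)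
    (hv3sol : ∀ t x, Dt v3 t x = A t x * Dx (Dx v3) t x + B t x * Dx v3 t x + C t x * v3 t x)
    (hv10 : ∀ t x, v1 t x ≠ 0)
    (W : ℝ → ℝ → ℝ) (hW : ∀ t x, W t x = v1 t x * Dx v2 t x - Dx v1 t x * v2 t x)
    (φ : ℝ → ℝ) (hφ : ContDiff ℝ 2 φ)
    (u : ℝ → ℝ → ℝ) (hu : ∀ t x, u t x = v1 t x * φ (v2 t x / v1 t x) + v3 t x) :
    (∀ t x, Dt u t x - A t x * Dx (Dx u) t x - B t x * Dx u t x - C t x * u t x =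
      - A t x * (W t x ^ 2 / v1 t x ^ 3) * deriv (deriv φ) (v2 t x / v1 t x)) ∧
    ((∀ ω : ℝ, deriv (deriv φ) ω = 0) →
      ∀ t x, Dt u t x = A t x * Dx (Dx u) t x + B t x * Dx u t x + C t x * u t x) := by
  have hφd : Differentiable ℝ φ := hφ.differentiable two_ne_zero
  have key : ∀ t x, Dt u t x - A t x * Dx (Dx u) t x - B t x * Dx u t x - C t x * u t x =
      - A t x * (W t x ^ 2 / v1 t x ^ 3) * deriv (deriv φ) (v2 t x / v1 t x) := by
    intro t x
    have hx1 := slice_x v1 hv1 t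
    have hx2 := slice_x v2 hv2 t
    have hx3 := slice_x v3 hv3 t
    have hx1d : Differentiable ℝ (fun y => v1 t y) := hx1.differentiable (by simp)
    have hx2d : Differentiable ℝ (fun y => v2 t y) := hx2.differentiable (by simp)
    have hx3d : Differentiable ℝ (fun y => v3 t y) := hx3.differentiable (by simp)
    have ht1d : Differentiable ℝ (fun s => v1 s x) := (slice_t v1 hv1 x).differentiable (by simp)
    have ht2d : Differentiable ℝ (fun s => v2 s x) := (slice_t v2 hv2 x).differentiable (by simp)
    have ht3d : Differentiable ℝ (fun s => v3 s x) := (slice_t v3 hv3 x).differentiable (by simp)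
    have h0x : ∀ y, v1 t y ≠ 0 := fun y => hv10 t y
    have h0t : ∀ s, v1 s x ≠ 0 := fun s => hv10 s x
    have hgu : (fun y => u t y) = fun y => v1 t y * φ (v2 t y / v1 t y) + v3 t y :=
      funext fun y => hu t y
    have hgu' : (fun s => u s x) = fun s => v1 s x * φ (v2 s x / v1 s x) + v3 s x :=
      funext fun s => hu s x
    have hDxu : Dx u t x = Dx v1 t x * φ (v2 t x / v1 t x) +
        v1 t x * (deriv φ (v2 t x / v1 t x) *
          ((Dx v2 t x * v1 t x - v2 t x * Dx v1 t x) / v1 t x ^ 2)) + Dx v3 t x := by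
      show deriv (fun y => u t y) x = _
      rw [hgu]
      exact (L1 φ _ _ _ hφd hx1d hx2d hx3d h0x x).deriv
    have hDtu : Dt u t x = Dt v1 t x * φ (v2 t x / v1 t x) +
        v1 t x * (deriv φ (v2 t x / v1 t x) *
          ((Dt v2 t x * v1 t x - v2 t x * Dt v1 t x) / v1 t x ^ 2)) + Dt v3 t x := by
      show deriv (fun s => u s x) t = _
      rw [hgu']
      exact (L1 φ _ _ _ hφd ht1d ht2d ht3d h0t t).deriv
    have hDxxu : Dx (Dx u) t x =
        Dx (Dx v1) t x * φ (v2 t x / v1 t x)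
        + 2 * Dx v1 t x * (deriv φ (v2 t x / v1 t x) *
            ((Dx v2 t x * v1 t x - v2 t x * Dx v1 t x) / v1 t x ^ 2))
        + v1 t x * (deriv (deriv φ) (v2 t x / v1 t x) *
            ((Dx v2 t x * v1 t x - v2 t x * Dx v1 t x) / v1 t x ^ 2) ^ 2)
        + v1 t x * (deriv φ (v2 t x / v1 t x) *
            (((Dx (Dx v2) t x * v1 t x - v2 t x * Dx (Dx v1) t x) * v1 t x
              - 2 * Dx v1 t x * (Dx v2 t x * v1 t x - v2 t x * Dx v1 t x)) / v1 t x ^ 3))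
        + Dx (Dx v3) t x := by
      show deriv (fun y => Dx u t y) x = _
      have he : (fun y => Dx u t y) = deriv (fun y => u t y) := rfl
      rw [he, hgu]
      exact L2 φ _ _ _ hφ hx1 hx2 hx3 h0x x
    rw [hDtu, hDxxu, hDxu, hu t x, hW t x, hv1sol t x, hv2sol t x, hv3sol t x]
    have h0 := hv10 t x
    field_simp
    ring
  refine ⟨key, fun h t x => ?_⟩
  have h1 := key t x
  rw [h (v2 t x / v1 t x), mul_zero] at h1
  linarith
end

section
/- Let A, B, C : ℝ² → ℝ be smooth with A nowhere zero, and suppose the smooth functions (g¹, g², g³) satisfy the determining system: g¹_t − Ag¹_{xx} − Bg¹_x + (2g¹_x − (A_x/A)g¹ − A_t/A)(g¹+B) + B_xg¹ + 2Ag²_x + B_t = 0; g²_t − Ag²_{xx} − Bg²_x + (2g¹_x − (A_x/A)g¹ − A_t/A)(g²−C) − C_xg¹ − C_t = 0; g³_t − Ag³_{xx} − Bg³_x + (2g¹_x − (A_x/A)g¹ − A_t/A)g³ − Cg³ = 0. Let f be any smooth solution of f_t = Af_{xx} + Bf_x + Cf. Then (g¹, g², g³ + f_t + f_xg¹ − fg²)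 also satisfies the same determining system. -/
/-- The determining system for reduction operators `∂_t + g¹∂_x + (g²u + g³)∂_u`
of the equation `u_t = A u_{xx} + B u_x + C u`. -/
def DetSys1 (A B C g1 g2 g3 : ℝ → ℝ → ℝ) : Prop :=
  ∀ t x,
    (Dt g1 t x - A t x * Dx (Dx g1) t x - B t x * Dx g1 t x
      + (2 * Dx g1 t x - Dx A t x / A t x * g1 t x - Dt A t x / A t x) * (g1 t x + B t x)
      + Dx B t x * g1 t x + 2 * A t x * Dx g2 t x + Dt B t x = 0) ∧
    (Dt g2 t x - A t x * Dx (Dx g2) t x - B t x * Dx g2 t x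
      + (2 * Dx g1 t x - Dx A t x / A t x * g1 t x - Dt A t x / A t x) * (g2 t x - C t x)
      - Dx C t x * g1 t x - Dt C t x = 0) ∧
    (Dt g3 t x - A t x * Dx (Dx g3) t x - B t x * Dx g3 t x
      + (2 * Dx g1 t x - Dx A t x / A t x * g1 t x - Dt A t x / A t x) * g3 t x
      - C t x * g3 t x = 0)

namespace SmoothAux

noncomputable def unc (u : ℝ → ℝ → ℝ) : ℝ × ℝ → ℝ := fun p => u p.1 p.2

variable {u : ℝ → ℝ → ℝ}

lemma hasDerivAt_slice_x (hu : Smooth2 u) (t x : ℝ) :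
    HasDerivAt (fun y => u t y) (fderiv ℝ (unc u) (t, x) (0, 1)) x := by
  have h1 : HasFDerivAt (unc u) (fderiv ℝ (unc u) (t, x)) (t, x) :=
    ((hu.differentiable (by simp)) (t, x)).hasFDerivAt
  have h2 : HasDerivAt (fun y : ℝ => ((t, y) : ℝ × ℝ)) (0, 1) x :=
    HasDerivAt.prodMk (hasDerivAt_const x t) (hasDerivAt_id x)
  exact h1.comp_hasDerivAt x h2

lemma hasDerivAt_slice_t (hu : Smooth2 u) (t x : ℝ) :
    HasDerivAt (fun s => u s x) (fderiv ℝ (unc u) (t, x) (1, 0)) t := by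
  have h1 : HasFDerivAt (unc u) (fderiv ℝ (unc u) (t, x)) (t, x) :=
    ((hu.differentiable (by simp)) (t, x)).hasFDerivAt
  have h2 : HasDerivAt (fun s : ℝ => ((s, x) : ℝ × ℝ)) (1, 0) t :=
    HasDerivAt.prodMk (hasDerivAt_id t) (hasDerivAt_const t x)
  exact h1.comp_hasDerivAt t h2

lemma hdx (hu : Smooth2 u) (t x : ℝ) : HasDerivAt (fun y => u t y) (Dx u t x) x :=
  (hasDerivAt_slice_x hu t x).differentiableAt.hasDerivAt

lemma hdt (hu : Smooth2 u) (t x : ℝ) : HasDerivAt (fun s => u s x) (Dt u t x) t :=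
  (hasDerivAt_slice_t hu t x).differentiableAt.hasDerivAt

lemma smooth_fderiv_apply (hu : Smooth2 u) (v : ℝ × ℝ) :
    ContDiff ℝ (⊤ : ℕ∞) (fun p : ℝ × ℝ => fderiv ℝ (unc u) p v) :=
  (hu.fderiv_right (by simp)).clm_apply contDiff_const

lemma sdx (hu : Smooth2 u) : Smooth2 (Dx u) := by
  have h : (fun p : ℝ × ℝ => Dx u p.1 p.2) = fun p => fderiv ℝ (unc u) p (0, 1) := by
    funext p; exact (hasDerivAt_slice_x hu p.1 p.2).deriv
  show ContDiff ℝ (⊤ : ℕ∞) _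
  rw [h]; exact smooth_fderiv_apply hu _

lemma sdt (hu : Smooth2 u) : Smooth2 (Dt u) := by
  have h : (fun p : ℝ × ℝ => Dt u p.1 p.2) = fun p => fderiv ℝ (unc u) p (1, 0) := by
    funext p; exact (hasDerivAt_slice_t hu p.1 p.2).deriv
  show ContDiff ℝ (⊤ : ℕ∞) _
  rw [h]; exact smooth_fderiv_apply hu _

lemma clairaut (hu : Smooth2 u) (t x : ℝ) : Dt (Dx u) t x = Dx (Dt u) t x := by
  have hdiff : Differentiable ℝ (unc u) := hu.differentiable (by simp)
  have hD : ContDiff ℝ (⊤ : ℕ∞) (fderiv ℝ (unc u)) := hu.fderiv_right (by simp)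
  have hD' : HasFDerivAt (fderiv ℝ (unc u)) (fderiv ℝ (fderiv ℝ (unc u)) (t, x)) (t, x) :=
    ((hD.differentiable (by simp)) (t, x)).hasFDerivAt
  have hsymm := second_derivative_symmetric (f := unc u) (f' := fderiv ℝ (unc u))
    (fun y => (hdiff y).hasFDerivAt) hD'
  have e1 : Dt (Dx u) t x = (fderiv ℝ (fderiv ℝ (unc u)) (t, x)) (1, 0) (0, 1) := by
    have hfun : (fun s => Dx u s x) = fun s =>
        (ContinuousLinearMap.apply ℝ ℝ ((0 : ℝ), (1 : ℝ))) (fderiv ℝ (unc u) (s, x)) := by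
      funext s; exact (hasDerivAt_slice_x hu s x).deriv
    have h2 : HasDerivAt (fun s : ℝ => ((s, x) : ℝ × ℝ)) (1, 0) t :=
      HasDerivAt.prodMk (hasDerivAt_id t) (hasDerivAt_const t x)
    have h3 : HasFDerivAt
        (fun p : ℝ × ℝ => (ContinuousLinearMap.apply ℝ ℝ ((0 : ℝ), (1 : ℝ))) (fderiv ℝ (unc u) p))
        ((ContinuousLinearMap.apply ℝ ℝ ((0 : ℝ), (1 : ℝ))).comp
          (fderiv ℝ (fderiv ℝ (unc u)) (t, x))) (t, x) :=
      (ContinuousLinearMap.apply ℝ ℝ ((0 : ℝ), (1 : ℝ))).hasFDerivAt.comp (t, x) hD'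
    have h4 := (h3.comp_hasDerivAt t h2).deriv
    show deriv (fun s => Dx u s x) t = _
    rw [hfun]
    exact h4
  have e2 : Dx (Dt u) t x = (fderiv ℝ (fderiv ℝ (unc u)) (t, x)) (0, 1) (1, 0) := by
    have hfun : (fun y => Dt u t y) = fun y =>
        (ContinuousLinearMap.apply ℝ ℝ ((1 : ℝ), (0 : ℝ))) (fderiv ℝ (unc u) (t, y)) := by
      funext y; exact (hasDerivAt_slice_t hu t y).deriv
    have h2 : HasDerivAt (fun y : ℝ => ((t, y) : ℝ × ℝ)) (0, 1) x :=
      HasDerivAt.prodMk (hasDerivAt_const x t) (hasDerivAt_id x)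
    have h3 : HasFDerivAt
        (fun p : ℝ × ℝ => (ContinuousLinearMap.apply ℝ ℝ ((1 : ℝ), (0 : ℝ))) (fderiv ℝ (unc u) p))
        ((ContinuousLinearMap.apply ℝ ℝ ((1 : ℝ), (0 : ℝ))).comp
          (fderiv ℝ (fderiv ℝ (unc u)) (t, x))) (t, x) :=
      (ContinuousLinearMap.apply ℝ ℝ ((1 : ℝ), (0 : ℝ))).hasFDerivAt.comp (t, x) hD'
    have h4 := (h3.comp_hasDerivAt x h2).deriv
    show deriv (fun y => Dt u t y) x = _
    rw [hfun]
    exact h4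
  rw [e1, e2, hsymm (1, 0) (0, 1)]

end SmoothAux

open SmoothAux in
theorem stmt_6 (A B C : ℝ → ℝ → ℝ) (hA : Smooth2 A) (hB : Smooth2 B) (hC : Smooth2 C)
    (hA0 : ∀ t x, A t x ≠ 0)
    (g1 g2 g3 : ℝ → ℝ → ℝ) (hg1 : Smooth2 g1) (hg2 : Smooth2 g2) (hg3 : Smooth2 g3)
    (hdet : DetSys1 A B C g1 g2 g3)
    (f : ℝ → ℝ → ℝ) (hf : Smooth2 f)
    (hfsol : ∀ t x, Dt f t x = A t x * Dx (Dx f) t x + B t x * Dx f t x + C t x * f t x) :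
    DetSys1 A B C g1 g2
      (fun t x => g3 t x + Dt f t x + Dx f t x * g1 t x - f t x * g2 t x) := by
  have hfx : Smooth2 (Dx f) := sdx hf
  have hfxx : Smooth2 (Dx (Dx f)) := sdx hfx
  have hfxxx : Smooth2 (Dx (Dx (Dx f))) := sdx hfxx
  have hft : Smooth2 (Dt f) := sdt hf
  have hAx : Smooth2 (Dx A) := sdx hA
  have hBx : Smooth2 (Dx B) := sdx hB
  have hCx : Smooth2 (Dx C) := sdx hC
  have hg1x : Smooth2 (Dx g1) := sdx hg1
  have hg2x : Smooth2 (Dx g2) := sdx hg2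
  have hg3x : Smooth2 (Dx g3) := sdx hg3
  -- first x-derivative of Dt f, via the PDE
  have hFx : ∀ t x, Dx (Dt f) t x =
      Dx A t x * Dx (Dx f) t x + A t x * Dx (Dx (Dx f)) t x + Dx B t x * Dx f t x
      + B t x * Dx (Dx f) t x + Dx C t x * f t x + C t x * Dx f t x := by
    intro t x
    have hsl : (fun y => Dt f t y)
        = fun y => A t y * Dx (Dx f) t y + B t y * Dx f t y + C t y * f t y :=
      funext fun y => hfsol t y
    have h := (((hdx hA t x).mul (hdx hfxx t x)).add ((hdx hB t x).mul (hdx hfx t x))).add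
      ((hdx hC t x).mul (hdx hf t x))
    show deriv (fun y => Dt f t y) x = _
    rw [hsl]
    exact h.deriv.trans (by ring)
  -- second x-derivative of Dt f
  have hFxx : ∀ t x, Dx (Dx (Dt f)) t x =
      Dx (Dx A) t x * Dx (Dx f) t x + 2 * Dx A t x * Dx (Dx (Dx f)) t x
      + A t x * Dx (Dx (Dx (Dx f))) t x + Dx (Dx B) t x * Dx f t x
      + 2 * Dx B t x * Dx (Dx f) t x + B t x * Dx (Dx (Dx f)) t x
      + Dx (Dx C) t x * f t x + 2 * Dx C t x * Dx f t x + C t x * Dx (Dx f) t x := by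
    intro t x
    have hsl : (fun y => Dx (Dt f) t y)
        = fun y => Dx A t y * Dx (Dx f) t y + A t y * Dx (Dx (Dx f)) t y + Dx B t y * Dx f t y
          + B t y * Dx (Dx f) t y + Dx C t y * f t y + C t y * Dx f t y :=
      funext fun y => hFx t y
    have h := ((((((hdx hAx t x).mul (hdx hfxx t x)).add
      ((hdx hA t x).mul (hdx hfxxx t x))).add
      ((hdx hBx t x).mul (hdx hfx t x))).add
      ((hdx hB t x).mul (hdx hfxx t x))).add
      ((hdx hCx t x).mul (hdx hf t x))).add
      ((hdx hC t x).mul (hdx hfx t x))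
    show deriv (fun y => Dx (Dt f) t y) x = _
    rw [hsl]
    exact h.deriv.trans (by ring)
  -- mixed derivatives, via Clairaut
  have hcomm : Dt (Dx f) = Dx (Dt f) := funext fun t => funext fun x => clairaut hf t x
  have hDtDxf : ∀ t x, Dt (Dx f) t x = Dx (Dt f) t x := clairaut hf
  have hDtDxxf : ∀ t x, Dt (Dx (Dx f)) t x = Dx (Dx (Dt f)) t x := by
    intro t x
    rw [clairaut hfx t x, hcomm]
  -- second t-derivative of f
  have hDtDtf : ∀ t x, Dt (Dt f) t x =
      Dt A t x * Dx (Dx f) t x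
      + A t x * (Dx (Dx A) t x * Dx (Dx f) t x + 2 * Dx A t x * Dx (Dx (Dx f)) t x
        + A t x * Dx (Dx (Dx (Dx f))) t x + Dx (Dx B) t x * Dx f t x
        + 2 * Dx B t x * Dx (Dx f) t x + B t x * Dx (Dx (Dx f)) t x
        + Dx (Dx C) t x * f t x + 2 * Dx C t x * Dx f t x + C t x * Dx (Dx f) t x)
      + Dt B t x * Dx f t x
      + B t x * (Dx A t x * Dx (Dx f) t x + A t x * Dx (Dx (Dx f)) t x + Dx B t x * Dx f t x
        + B t x * Dx (Dx f) t x + Dx C t x * f t x + C t x * Dx f t x)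
      + Dt C t x * f t x
      + C t x * (A t x * Dx (Dx f) t x + B t x * Dx f t x + C t x * f t x) := by
    intro t x
    have hsl : (fun s => Dt f s x)
        = fun s => A s x * Dx (Dx f) s x + B s x * Dx f s x + C s x * f s x :=
      funext fun s => hfsol s x
    have h := (((hdt hA t x).mul (hdt hfxx t x)).add ((hdt hB t x).mul (hdt hfx t x))).add
      ((hdt hC t x).mul (hdt hf t x))
    show deriv (fun s => Dt f s x) t = _
    rw [hsl]
    refine h.deriv.trans ?_
    rw [hDtDxxf t x, hFxx t x, hDtDxf t x, hFx t x, hfsol t x]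
    ring
  -- derivatives of the modified g3
  have hG3x : ∀ t x,
      Dx (fun t x => g3 t x + Dt f t x + Dx f t x * g1 t x - f t x * g2 t x) t x =
      Dx g3 t x + Dx A t x * Dx (Dx f) t x + A t x * Dx (Dx (Dx f)) t x + Dx B t x * Dx f t x
      + B t x * Dx (Dx f) t x + Dx C t x * f t x + C t x * Dx f t x
      + Dx (Dx f) t x * g1 t x + Dx f t x * Dx g1 t x
      - Dx f t x * g2 t x - f t x * Dx g2 t x := by
    intro t x
    have h := (((hdx hg3 t x).add (hdx hft t x)).add
      ((hdx hfx t x).mul (hdx hg1 t x))).sub ((hdx hf t x).mul (hdx hg2 t x))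
    show deriv (fun y => g3 t y + Dt f t y + Dx f t y * g1 t y - f t y * g2 t y) x = _
    refine h.deriv.trans ?_
    rw [hFx t x]
    ring
  have hG3xx : ∀ t x,
      Dx (Dx (fun t x => g3 t x + Dt f t x + Dx f t x * g1 t x - f t x * g2 t x)) t x =
      Dx (Dx g3) t x
      + (Dx (Dx A) t x * Dx (Dx f) t x + 2 * Dx A t x * Dx (Dx (Dx f)) t x
        + A t x * Dx (Dx (Dx (Dx f))) t x + Dx (Dx B) t x * Dx f t x
        + 2 * Dx B t x * Dx (Dx f) t x + B t x * Dx (Dx (Dx f)) t x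
        + Dx (Dx C) t x * f t x + 2 * Dx C t x * Dx f t x + C t x * Dx (Dx f) t x)
      + Dx (Dx (Dx f)) t x * g1 t x + 2 * Dx (Dx f) t x * Dx g1 t x
      + Dx f t x * Dx (Dx g1) t x
      - Dx (Dx f) t x * g2 t x - 2 * Dx f t x * Dx g2 t x - f t x * Dx (Dx g2) t x := by
    intro t x
    have hsl : (fun y =>
        Dx (fun t x => g3 t x + Dt f t x + Dx f t x * g1 t x - f t x * g2 t x) t y)
        = fun y => Dx g3 t y + Dx A t y * Dx (Dx f) t y + A t y * Dx (Dx (Dx f)) t y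
          + Dx B t y * Dx f t y + B t y * Dx (Dx f) t y + Dx C t y * f t y + C t y * Dx f t y
          + Dx (Dx f) t y * g1 t y + Dx f t y * Dx g1 t y
          - Dx f t y * g2 t y - f t y * Dx g2 t y :=
      funext fun y => hG3x t y
    have h := ((((((((((hdx hg3x t x).add
      ((hdx hAx t x).mul (hdx hfxx t x))).add
      ((hdx hA t x).mul (hdx hfxxx t x))).add
      ((hdx hBx t x).mul (hdx hfx t x))).add
      ((hdx hB t x).mul (hdx hfxx t x))).add
      ((hdx hCx t x).mul (hdx hf t x))).add
      ((hdx hC t x).mul (hdx hfx t x))).add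
      ((hdx hfxx t x).mul (hdx hg1 t x))).add
      ((hdx hfx t x).mul (hdx hg1x t x))).sub
      ((hdx hfx t x).mul (hdx hg2 t x))).sub
      ((hdx hf t x).mul (hdx hg2x t x))
    show deriv (fun y =>
      Dx (fun t x => g3 t x + Dt f t x + Dx f t x * g1 t x - f t x * g2 t x) t y) x = _
    rw [hsl]
    exact h.deriv.trans (by ring)
  have hG3t : ∀ t x,
      Dt (fun t x => g3 t x + Dt f t x + Dx f t x * g1 t x - f t x * g2 t x) t x =
      Dt g3 t x
      + (Dt A t x * Dx (Dx f) t x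
        + A t x * (Dx (Dx A) t x * Dx (Dx f) t x + 2 * Dx A t x * Dx (Dx (Dx f)) t x
          + A t x * Dx (Dx (Dx (Dx f))) t x + Dx (Dx B) t x * Dx f t x
          + 2 * Dx B t x * Dx (Dx f) t x + B t x * Dx (Dx (Dx f)) t x
          + Dx (Dx C) t x * f t x + 2 * Dx C t x * Dx f t x + C t x * Dx (Dx f) t x)
        + Dt B t x * Dx f t x
        + B t x * (Dx A t x * Dx (Dx f) t x + A t x * Dx (Dx (Dx f)) t x + Dx B t x * Dx f t x
          + B t x * Dx (Dx f) t x + Dx C t x * f t x + C t x * Dx f t x)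
        + Dt C t x * f t x
        + C t x * (A t x * Dx (Dx f) t x + B t x * Dx f t x + C t x * f t x))
      + (Dx A t x * Dx (Dx f) t x + A t x * Dx (Dx (Dx f)) t x + Dx B t x * Dx f t x
        + B t x * Dx (Dx f) t x + Dx C t x * f t x + C t x * Dx f t x) * g1 t x
      + Dx f t x * Dt g1 t x
      - (A t x * Dx (Dx f) t x + B t x * Dx f t x + C t x * f t x) * g2 t x
      - f t x * Dt g2 t x := by
    intro t x
    have h := (((hdt hg3 t x).add (hdt hft t x)).add
      ((hdt hfx t x).mul (hdt hg1 t x))).sub ((hdt hf t x).mul (hdt hg2 t x))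
    show deriv (fun s => g3 s x + Dt f s x + Dx f s x * g1 s x - f s x * g2 s x) t = _
    refine h.deriv.trans ?_
    rw [hDtDtf t x, hDtDxf t x, hFx t x, hfsol t x]
    ring
  -- conclusion
  intro t x
  obtain ⟨h1, h2, h3⟩ := hdet t x
  refine ⟨h1, h2, ?_⟩
  have hval : (fun t x => g3 t x + Dt f t x + Dx f t x * g1 t x - f t x * g2 t x) t x
      = g3 t x + Dt f t x + Dx f t x * g1 t x - f t x * g2 t x := rfl
  rw [hG3t t x, hG3xx t x, hG3x t x, hval, hfsol t x]
  have hQA : A t x * (2 * Dx g1 t x - Dx A t x / A t x * g1 t x - Dt A t x / A t x)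
      = 2 * A t x * Dx g1 t x - Dx A t x * g1 t x - Dt A t x := by
    have h0 := hA0 t x
    field_simp
  linear_combination Dx f t x * h1 - f t x * h2 + h3 + Dx (Dx f) t x * hQA
end

section
/- Let A, B, C : ℝ² → ℝ be smooth and let η : ℝ³ → ℝ, η = η(t,x,u), be a smooth solution of the determining equation η_t = A(η_{xx} + 2ηη_{xu} + η²η_{uu}) + A_x(η_x + ηη_u) + B_xη + Bη_x + C(η − uη_u) + C_xu. Suppose u : ℝ² → ℝ is smooth and satisfies the invariant surface condition u_x(t,x) = η(t,x,u(t,x)) for all (t,x). Then the function g := u_t − Au_{xx} − Bu_x − Cu satisfies g_x(t,x) = η_u(t,x,u(t,x))·g(t,x) for all (t,x). -/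
/-- Partial derivative in `t` of a function `η = η(t,x,u)`. -/
noncomputable def Et (η : ℝ → ℝ → ℝ → ℝ) : ℝ → ℝ → ℝ → ℝ :=
  fun t x v => deriv (fun s => η s x v) t

/-- Partial derivative in `x` of a function `η = η(t,x,u)`. -/
noncomputable def Ex (η : ℝ → ℝ → ℝ → ℝ) : ℝ → ℝ → ℝ → ℝ :=
  fun t x v => deriv (fun y => η t y v) x

/-- Partial derivative in `u` of a function `η = η(t,x,u)`. -/
noncomputable def Eu (η : ℝ → ℝ → ℝ → ℝ) : ℝ → ℝ → ℝ → ℝ :=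
  fun t x v => deriv (fun w => η t x w) v

/-- Smoothness of a function of three real variables. -/
def Smooth3 (η : ℝ → ℝ → ℝ → ℝ) : Prop :=
  ContDiff ℝ (⊤ : ℕ∞) (fun p : ℝ × ℝ × ℝ => η p.1 p.2.1 p.2.2)

/- ### Auxiliary lemmas -/

section helpers
variable {E : Type*} [NormedAddCommGroup E] [NormedSpace ℝ E]

lemma pderiv_eq {F : E → ℝ} (hF : Differentiable ℝ F) {φ : ℝ → E} {φ' : E} {t : ℝ}
    (hφ : HasDerivAt φ φ' t) : HasDerivAt (fun s => F (φ s)) (fderiv ℝ F (φ t) φ') t :=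
  (hF (φ t)).hasFDerivAt.comp_hasDerivAt t hφ

lemma contDiff_pd {F : E → ℝ} (hF : ContDiff ℝ (⊤ : ℕ∞) F) (w : E) :
    ContDiff ℝ (⊤ : ℕ∞) (fun q => fderiv ℝ F q w) :=
  (hF.fderiv_right (by simp)).clm_apply contDiff_const

lemma fderiv_pd {F : E → ℝ} (hF : ContDiff ℝ (⊤ : ℕ∞) F) (p v w : E) :
    fderiv ℝ (fun q => fderiv ℝ F q w) p v = fderiv ℝ (fderiv ℝ F) p v w := by
  have h1 : HasFDerivAt (fderiv ℝ F) (fderiv ℝ (fderiv ℝ F) p) p :=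
    (((hF.fderiv_right (m := (⊤ : ℕ∞)) (by simp)).differentiable (by simp)) p).hasFDerivAt
  have h2 := (ContinuousLinearMap.apply ℝ ℝ w).hasFDerivAt.comp p h1
  have h3 : fderiv ℝ (fun q => fderiv ℝ F q w) p =
      (ContinuousLinearMap.apply ℝ ℝ w).comp (fderiv ℝ (fderiv ℝ F) p) := h2.fderiv
  rw [h3]; rfl

lemma fderiv_symm {F : E → ℝ} (hF : ContDiff ℝ (⊤ : ℕ∞) F) (p v w : E) :
    fderiv ℝ (fderiv ℝ F) p v w = fderiv ℝ (fderiv ℝ F) p w v :=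
  second_derivative_symmetric (fun y => ((hF.differentiable (by simp)) y).hasFDerivAt)
    (((hF.fderiv_right (m := (⊤ : ℕ∞)) (by simp)).differentiable (by simp) p).hasFDerivAt) v w

end helpers

lemma expand3 (L : ℝ × ℝ × ℝ →L[ℝ] ℝ) (a b c : ℝ) :
    L (a, b, c) = a * L (1,0,0) + b * L (0,1,0) + c * L (0,0,1) := by
  have h : (a, b, c) = a • ((1:ℝ),(0:ℝ),(0:ℝ)) + b • ((0:ℝ),(1:ℝ),(0:ℝ))
      + c • ((0:ℝ),(0:ℝ),(1:ℝ)) := by simp [Prod.ext_iff]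
  rw [h, map_add, map_add, map_smul, map_smul, map_smul]; simp [smul_eq_mul]

/-- The uncurried form of a function of three variables. -/
noncomputable def Hf (η : ℝ → ℝ → ℝ → ℝ) : ℝ × ℝ × ℝ → ℝ := fun p => η p.1 p.2.1 p.2.2

/-- The uncurried form of a function of two variables. -/
noncomputable def Gf (f : ℝ → ℝ → ℝ) : ℝ × ℝ → ℝ := fun p => f p.1 p.2

lemma repEt {θ : ℝ → ℝ → ℝ → ℝ} (hθ : Smooth3 θ) (a b c : ℝ) :
    Et θ a b c = fderiv ℝ (Hf θ) (a,b,c) (1,0,0) := by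
  have hH : Differentiable ℝ (Hf θ) := (show ContDiff ℝ (⊤ : ℕ∞) (Hf θ) from hθ).differentiable (by simp)
  have hφ : HasDerivAt (fun s : ℝ => (s, (b, c))) ((1:ℝ), (0:ℝ), (0:ℝ)) a :=
    (hasDerivAt_id a).prodMk ((hasDerivAt_const a b).prodMk (hasDerivAt_const a c))
  exact (pderiv_eq hH hφ).deriv

lemma repEx {θ : ℝ → ℝ → ℝ → ℝ} (hθ : Smooth3 θ) (a b c : ℝ) :
    Ex θ a b c = fderiv ℝ (Hf θ) (a,b,c) (0,1,0) := by
  have hH : Differentiable ℝ (Hf θ) := (show ContDiff ℝ (⊤ : ℕ∞) (Hf θ) from hθ).differentiable (by simp)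
  have hφ : HasDerivAt (fun y : ℝ => (a, (y, c))) ((0:ℝ), (1:ℝ), (0:ℝ)) b :=
    (hasDerivAt_const b a).prodMk ((hasDerivAt_id b).prodMk (hasDerivAt_const b c))
  exact (pderiv_eq hH hφ).deriv

lemma repEu {θ : ℝ → ℝ → ℝ → ℝ} (hθ : Smooth3 θ) (a b c : ℝ) :
    Eu θ a b c = fderiv ℝ (Hf θ) (a,b,c) (0,0,1) := by
  have hH : Differentiable ℝ (Hf θ) := (show ContDiff ℝ (⊤ : ℕ∞) (Hf θ) from hθ).differentiable (by simp)
  have hφ : HasDerivAt (fun w : ℝ => (a, (b, w))) ((0:ℝ), (0:ℝ), (1:ℝ)) c :=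
    (hasDerivAt_const c a).prodMk ((hasDerivAt_const c b).prodMk (hasDerivAt_id c))
  exact (pderiv_eq hH hφ).deriv

lemma repDt {f : ℝ → ℝ → ℝ} (hf : Smooth2 f) (a b : ℝ) :
    Dt f a b = fderiv ℝ (Gf f) (a,b) (1,0) := by
  have hG : Differentiable ℝ (Gf f) := (show ContDiff ℝ (⊤ : ℕ∞) (Gf f) from hf).differentiable (by simp)
  have hφ : HasDerivAt (fun s : ℝ => (s, b)) ((1:ℝ), (0:ℝ)) a :=
    (hasDerivAt_id a).prodMk (hasDerivAt_const a b)
  exact (pderiv_eq hG hφ).deriv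

lemma repDx {f : ℝ → ℝ → ℝ} (hf : Smooth2 f) (a b : ℝ) :
    Dx f a b = fderiv ℝ (Gf f) (a,b) (0,1) := by
  have hG : Differentiable ℝ (Gf f) := (show ContDiff ℝ (⊤ : ℕ∞) (Gf f) from hf).differentiable (by simp)
  have hφ : HasDerivAt (fun y : ℝ => (a, y)) ((0:ℝ), (1:ℝ)) b :=
    (hasDerivAt_const b a).prodMk (hasDerivAt_id b)
  exact (pderiv_eq hG hφ).deriv

lemma smooth_Ex {θ : ℝ → ℝ → ℝ → ℝ} (hθ : Smooth3 θ) : Smooth3 (Ex θ) := by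
  have hH : ContDiff ℝ (⊤ : ℕ∞) (Hf θ) := hθ
  have h : (fun p : ℝ × ℝ × ℝ => Ex θ p.1 p.2.1 p.2.2)
      = fun p => fderiv ℝ (Hf θ) p (0,1,0) := funext fun p => repEx hθ p.1 p.2.1 p.2.2
  show ContDiff ℝ (⊤ : ℕ∞) (fun p : ℝ × ℝ × ℝ => Ex θ p.1 p.2.1 p.2.2)
  rw [h]; exact contDiff_pd hH _

lemma smooth_Eu {θ : ℝ → ℝ → ℝ → ℝ} (hθ : Smooth3 θ) : Smooth3 (Eu θ) := by
  have hH : ContDiff ℝ (⊤ : ℕ∞) (Hf θ) := hθ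
  have h : (fun p : ℝ × ℝ × ℝ => Eu θ p.1 p.2.1 p.2.2)
      = fun p => fderiv ℝ (Hf θ) p (0,0,1) := funext fun p => repEu hθ p.1 p.2.1 p.2.2
  show ContDiff ℝ (⊤ : ℕ∞) (fun p : ℝ × ℝ × ℝ => Eu θ p.1 p.2.1 p.2.2)
  rw [h]; exact contDiff_pd hH _

lemma chainX {θ : ℝ → ℝ → ℝ → ℝ} (hθ : Smooth3 θ) {w : ℝ → ℝ} {w' t x : ℝ}
    (hw : HasDerivAt w w' x) :
    HasDerivAt (fun y => θ t y (w y)) (Ex θ t x (w x) + w' * Eu θ t x (w x)) x := by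
  have hH : ContDiff ℝ (⊤ : ℕ∞) (Hf θ) := hθ
  have hφ : HasDerivAt (fun y : ℝ => (t, (y, w y))) ((0:ℝ), (1:ℝ), w') x :=
    (hasDerivAt_const x t).prodMk ((hasDerivAt_id x).prodMk hw)
  have h : HasDerivAt (fun y => θ t y (w y))
      (fderiv ℝ (Hf θ) (t, x, w x) ((0:ℝ), (1:ℝ), w')) x :=
    pderiv_eq (hH.differentiable (by simp)) hφ
  have hv : fderiv ℝ (Hf θ) (t, x, w x) ((0:ℝ), (1:ℝ), w')
      = Ex θ t x (w x) + w' * Eu θ t x (w x) := by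
    rw [expand3, ← repEt hθ, ← repEx hθ, ← repEu hθ]; ring
  rw [hv] at h; exact h

lemma chainT {θ : ℝ → ℝ → ℝ → ℝ} (hθ : Smooth3 θ) {w : ℝ → ℝ} {w' x t : ℝ}
    (hw : HasDerivAt w w' t) :
    HasDerivAt (fun s => θ s x (w s)) (Et θ t x (w t) + w' * Eu θ t x (w t)) t := by
  have hH : ContDiff ℝ (⊤ : ℕ∞) (Hf θ) := hθ
  have hφ : HasDerivAt (fun s : ℝ => (s, (x, w s))) ((1:ℝ), (0:ℝ), w') t :=
    (hasDerivAt_id t).prodMk ((hasDerivAt_const t x).prodMk hw)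
  have h : HasDerivAt (fun s => θ s x (w s))
      (fderiv ℝ (Hf θ) (t, x, w t) ((1:ℝ), (0:ℝ), w')) t :=
    pderiv_eq (hH.differentiable (by simp)) hφ
  have hv : fderiv ℝ (Hf θ) (t, x, w t) ((1:ℝ), (0:ℝ), w')
      = Et θ t x (w t) + w' * Eu θ t x (w t) := by
    rw [expand3, ← repEt hθ, ← repEx hθ, ← repEu hθ]; ring
  rw [hv] at h; exact h

lemma EuEx_symm {θ : ℝ → ℝ → ℝ → ℝ} (hθ : Smooth3 θ) (a b c : ℝ) :
    Ex (Eu θ) a b c = Eu (Ex θ) a b c := by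
  have hH : ContDiff ℝ (⊤ : ℕ∞) (Hf θ) := hθ
  have h1 : Ex (Eu θ) a b c = fderiv ℝ (fderiv ℝ (Hf θ)) (a,b,c) (0,1,0) (0,0,1) := by
    have hrw : (fun y => Eu θ a y c) = fun y => fderiv ℝ (Hf θ) (a,y,c) (0,0,1) :=
      funext fun y => repEu hθ a y c
    show deriv (fun y => Eu θ a y c) b = _
    rw [hrw]
    have hφ : HasDerivAt (fun y : ℝ => (a, (y, c))) ((0:ℝ), (1:ℝ), (0:ℝ)) b :=
      (hasDerivAt_const b a).prodMk ((hasDerivAt_id b).prodMk (hasDerivAt_const b c))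
    have h : HasDerivAt (fun y : ℝ => fderiv ℝ (Hf θ) (a,y,c) ((0:ℝ),(0:ℝ),(1:ℝ)))
        (fderiv ℝ (fun q => fderiv ℝ (Hf θ) q ((0:ℝ),(0:ℝ),(1:ℝ))) (a,b,c) ((0:ℝ),(1:ℝ),(0:ℝ))) b :=
      pderiv_eq ((contDiff_pd hH ((0:ℝ),(0:ℝ),(1:ℝ))).differentiable (by simp)) hφ
    rw [h.deriv]
    exact fderiv_pd hH _ _ _
  have h2 : Eu (Ex θ) a b c = fderiv ℝ (fderiv ℝ (Hf θ)) (a,b,c) (0,0,1) (0,1,0) := by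
    have hrw : (fun w => Ex θ a b w) = fun w => fderiv ℝ (Hf θ) (a,b,w) (0,1,0) :=
      funext fun w => repEx hθ a b w
    show deriv (fun w => Ex θ a b w) c = _
    rw [hrw]
    have hφ : HasDerivAt (fun w : ℝ => (a, (b, w))) ((0:ℝ), (0:ℝ), (1:ℝ)) c :=
      (hasDerivAt_const c a).prodMk ((hasDerivAt_const c b).prodMk (hasDerivAt_id c))
    have h : HasDerivAt (fun w : ℝ => fderiv ℝ (Hf θ) (a,b,w) ((0:ℝ),(1:ℝ),(0:ℝ)))
        (fderiv ℝ (fun q => fderiv ℝ (Hf θ) q ((0:ℝ),(1:ℝ),(0:ℝ))) (a,b,c) ((0:ℝ),(0:ℝ),(1:ℝ))) c :=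
      pderiv_eq ((contDiff_pd hH ((0:ℝ),(1:ℝ),(0:ℝ))).differentiable (by simp)) hφ
    rw [h.deriv]
    exact fderiv_pd hH _ _ _
  rw [h1, h2, fderiv_symm hH]

lemma slice_x_s9 {f : ℝ → ℝ → ℝ} (hf : Smooth2 f) (t x : ℝ) :
    HasDerivAt (fun y => f t y) (Dx f t x) x := by
  have hG : ContDiff ℝ (⊤ : ℕ∞) (Gf f) := hf
  have hφ : HasDerivAt (fun y : ℝ => (t, y)) ((0:ℝ), (1:ℝ)) x :=
    (hasDerivAt_const x t).prodMk (hasDerivAt_id x)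
  have h : HasDerivAt (fun y => f t y) (fderiv ℝ (Gf f) (t,x) (0,1)) x :=
    pderiv_eq (hG.differentiable (by simp)) hφ
  rwa [← repDx hf t x] at h

lemma slice_t_s9 {f : ℝ → ℝ → ℝ} (hf : Smooth2 f) (t x : ℝ) :
    HasDerivAt (fun s => f s x) (Dt f t x) t := by
  have hG : ContDiff ℝ (⊤ : ℕ∞) (Gf f) := hf
  have hφ : HasDerivAt (fun s : ℝ => (s, x)) ((1:ℝ), (0:ℝ)) t :=
    (hasDerivAt_id t).prodMk (hasDerivAt_const t x)
  have h : HasDerivAt (fun s => f s x) (fderiv ℝ (Gf f) (t,x) (1,0)) t :=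
    pderiv_eq (hG.differentiable (by simp)) hφ
  rwa [← repDt hf t x] at h

theorem stmt_9 (A B C : ℝ → ℝ → ℝ) (hA : Smooth2 A) (hB : Smooth2 B) (hC : Smooth2 C)
    (η : ℝ → ℝ → ℝ → ℝ) (hη : Smooth3 η)
    (hdet : ∀ t x v, Et η t x v =
      A t x * (Ex (Ex η) t x v + 2 * η t x v * Eu (Ex η) t x v
        + (η t x v) ^ 2 * Eu (Eu η) t x v)
      + Dx A t x * (Ex η t x v + η t x v * Eu η t x v)
      + Dx B t x * η t x v + B t x * Ex η t x v
      + C t x * (η t x v - v * Eu η t x v) + Dx C t x * v)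
    (u : ℝ → ℝ → ℝ) (hu : Smooth2 u)
    (hisc : ∀ t x, Dx u t x = η t x (u t x))
    (g : ℝ → ℝ → ℝ)
    (hg : ∀ t x, g t x =
      Dt u t x - A t x * Dx (Dx u) t x - B t x * Dx u t x - C t x * u t x) :
    ∀ t x, Dx g t x = Eu η t x (u t x) * g t x := by
  intro t x
  have hG : ContDiff ℝ (⊤ : ℕ∞) (Gf u) := hu
  -- x-derivative of u along the slice, rewritten via the invariant surface condition
  have hw : ∀ y, HasDerivAt (fun y' => u t y') (η t y (u t y)) y := fun y => by
    have h := slice_x_s9 hu t y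
    rwa [hisc t y] at h
  -- second x-derivative of u
  have hxx : ∀ y, Dx (Dx u) t y
      = Ex η t y (u t y) + η t y (u t y) * Eu η t y (u t y) := fun y => by
    have hrw : (fun y' => Dx u t y') = fun y' => η t y' (u t y') :=
      funext fun y' => hisc t y'
    show deriv (fun y' => Dx u t y') y = _
    rw [hrw]
    exact (chainX hη (hw y)).deriv
  -- rewrite g along the slice
  have hgfun : (fun y => g t y) = fun y =>
      Dt u t y - A t y * (Ex η t y (u t y) + η t y (u t y) * Eu η t y (u t y))
        - B t y * η t y (u t y) - C t y * u t y :=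
    funext fun y => by rw [hg t y, hxx y, hisc t y]
  -- mixed second derivative : HasDerivAt of (Dt u) in x with Clairaut and chain rule
  have hDtu' : HasDerivAt (fun y => Dt u t y)
      (Et η t x (u t x) + Dt u t x * Eu η t x (u t x)) x := by
    have hφ : HasDerivAt (fun y : ℝ => (t, y)) ((0:ℝ), (1:ℝ)) x :=
      (hasDerivAt_const x t).prodMk (hasDerivAt_id x)
    have h : HasDerivAt (fun y : ℝ => fderiv ℝ (Gf u) (t,y) ((1:ℝ),(0:ℝ)))
        (fderiv ℝ (fun q => fderiv ℝ (Gf u) q ((1:ℝ),(0:ℝ))) (t,x) ((0:ℝ),(1:ℝ))) x :=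
      pderiv_eq ((contDiff_pd hG ((1:ℝ),(0:ℝ))).differentiable (by simp)) hφ
    have hrw : (fun y => Dt u t y) = fun y : ℝ => fderiv ℝ (Gf u) (t,y) ((1:ℝ),(0:ℝ)) :=
      funext fun y => repDt hu t y
    rw [← hrw] at h
    have hval : fderiv ℝ (fun q => fderiv ℝ (Gf u) q ((1:ℝ),(0:ℝ))) (t,x) ((0:ℝ),(1:ℝ))
        = Et η t x (u t x) + Dt u t x * Eu η t x (u t x) := by
      rw [fderiv_pd hG, fderiv_symm hG]
      have h1 : HasDerivAt (fun s : ℝ => fderiv ℝ (Gf u) (s,x) ((0:ℝ),(1:ℝ)))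
          (fderiv ℝ (fun q => fderiv ℝ (Gf u) q ((0:ℝ),(1:ℝ))) (t,x) ((1:ℝ),(0:ℝ))) t :=
        pderiv_eq ((contDiff_pd hG ((0:ℝ),(1:ℝ))).differentiable (by simp))
          ((hasDerivAt_id t).prodMk (hasDerivAt_const t x))
      have hrw2 : (fun s : ℝ => fderiv ℝ (Gf u) (s,x) ((0:ℝ),(1:ℝ)))
          = fun s => η s x (u s x) := funext fun s => by rw [← repDx hu s x, hisc s x]
      rw [hrw2] at h1
      have h2 : HasDerivAt (fun s => η s x (u s x))
          (Et η t x (u t x) + Dt u t x * Eu η t x (u t x)) t := chainT hη (slice_t_s9 hu t x)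
      have h3 := h1.unique h2
      rw [fderiv_pd hG] at h3
      exact h3
    rw [hval] at h
    exact h
  -- derivatives of the coefficient slices and of η-compositions at x
  have hA1 := slice_x_s9 hA t x
  have hB1 := slice_x_s9 hB t x
  have hC1 := slice_x_s9 hC t x
  have hη1 := chainX (t := t) hη (hw x)
  have hηx := chainX (t := t) (smooth_Ex hη) (hw x)
  have hηu := chainX (t := t) (smooth_Eu hη) (hw x)
  have H := ((hDtu'.sub (hA1.mul (hηx.add (hη1.mul hηu)))).sub (hB1.mul hη1)).sub
    (hC1.mul (hw x))
  have key : Dx g t x = ((Et η t x (u t x) + Dt u t x * Eu η t x (u t x))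
      - (Dx A t x * (Ex η t x (u t x) + η t x (u t x) * Eu η t x (u t x))
         + A t x * ((Ex (Ex η) t x (u t x) + η t x (u t x) * Eu (Ex η) t x (u t x))
           + ((Ex η t x (u t x) + η t x (u t x) * Eu η t x (u t x)) * Eu η t x (u t x)
              + η t x (u t x) * (Ex (Eu η) t x (u t x)
                + η t x (u t x) * Eu (Eu η) t x (u t x))))))
      - (Dx B t x * η t x (u t x)
         + B t x * (Ex η t x (u t x) + η t x (u t x) * Eu η t x (u t x)))
      - (Dx C t x * u t x + C t x * η t x (u t x)) := by
    show deriv (fun y => g t y) x = _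
    rw [hgfun]
    exact H.deriv
  rw [key, hg t x, hisc t x, hxx x, EuEx_symm hη t x (u t x)]
  linear_combination hdet t x (u t x)
end

section
/- Let A, B, C : ℝ² → ℝ be smooth and let Ψ¹, Ψ⁰ be smooth solutions of Ψ_t = AΨ_{xx} + BΨ_x + CΨ with Ψ¹ nowhere zero. Then the functions η¹ := Ψ¹_x/Ψ¹ and η⁰ := Ψ⁰_x − (Ψ¹_x/Ψ¹)Ψ⁰ satisfy the system η¹_t = (Aη¹_x + A(η¹)² + Bη¹ + C)_x and η⁰_t = A(η⁰_{xx} + 2η⁰η¹_x) + A_x(η⁰_x + η⁰η¹) + (Bη⁰)_x + Cη⁰. -/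
theorem hasDerivAt_value_congr {f : ℝ → ℝ} {v w x : ℝ} (h : HasDerivAt f v x)
    (hv : v = w) : HasDerivAt f w x := hv ▸ h

namespace Smooth2

variable {u : ℝ → ℝ → ℝ}

noncomputable def F2 (u : ℝ → ℝ → ℝ) : ℝ × ℝ → ℝ := fun p => u p.1 p.2

theorem hasDerivAt_x' (h : Smooth2 u) (t x : ℝ) :
    HasDerivAt (fun y => u t y) (fderiv ℝ (F2 u) (t, x) (0, 1)) x := by
  have hγ : HasDerivAt (fun y : ℝ => ((t, y) : ℝ × ℝ)) ((0 : ℝ), (1 : ℝ)) x :=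
    (hasDerivAt_const x t).prodMk (hasDerivAt_id x)
  exact ((h.differentiable (by simp) (t, x)).hasFDerivAt).comp_hasDerivAt x hγ

theorem hasDerivAt_t' (h : Smooth2 u) (t x : ℝ) :
    HasDerivAt (fun s => u s x) (fderiv ℝ (F2 u) (t, x) (1, 0)) t := by
  have hγ : HasDerivAt (fun s : ℝ => ((s, x) : ℝ × ℝ)) ((1 : ℝ), (0 : ℝ)) t :=
    (hasDerivAt_id t).prodMk (hasDerivAt_const t x)
  exact ((h.differentiable (by simp) (t, x)).hasFDerivAt).comp_hasDerivAt t hγ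

theorem dx_eq (h : Smooth2 u) (t x : ℝ) : Dx u t x = fderiv ℝ (F2 u) (t, x) (0, 1) :=
  (h.hasDerivAt_x' t x).deriv

theorem dt_eq (h : Smooth2 u) (t x : ℝ) : Dt u t x = fderiv ℝ (F2 u) (t, x) (1, 0) :=
  (h.hasDerivAt_t' t x).deriv

theorem hasDerivAt_x (h : Smooth2 u) (t x : ℝ) :
    HasDerivAt (fun y => u t y) (Dx u t x) x := by
  rw [h.dx_eq]; exact h.hasDerivAt_x' t x

theorem hasDerivAt_t (h : Smooth2 u) (t x : ℝ) :
    HasDerivAt (fun s => u s x) (Dt u t x) t := by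
  rw [h.dt_eq]; exact h.hasDerivAt_t' t x

theorem dx_s11 (h : Smooth2 u) : Smooth2 (Dx u) := by
  have : (fun p : ℝ × ℝ => Dx u p.1 p.2) = fun p => fderiv ℝ (F2 u) p (0, 1) :=
    funext fun p => h.dx_eq p.1 p.2
  unfold Smooth2
  rw [this]
  exact (h.fderiv_right (by simp)).clm_apply contDiff_const

theorem clairaut (h : Smooth2 u) (t x : ℝ) : Dt (Dx u) t x = Dx (Dt u) t x := by
  have hd : Differentiable ℝ (fderiv ℝ (F2 u)) := (h.fderiv_right (m := (⊤ : ℕ∞)) (by simp)).differentiable (by simp)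
  have hsymm : IsSymmSndFDerivAt ℝ (F2 u) (t, x) :=
    h.contDiffAt.isSymmSndFDerivAt (by rw [minSmoothness_of_isRCLikeNormedField]; exact WithTop.coe_le_coe.mpr (le_top : (2 : ℕ∞) ≤ ⊤))
  have h1 : Dt (Dx u) t x = fderiv ℝ (fderiv ℝ (F2 u)) (t, x) (1, 0) (0, 1) := by
    have heq : (fun s => Dx u s x) = fun s => fderiv ℝ (F2 u) (s, x) (0, 1) :=
      funext fun s => h.dx_eq s x
    have hγ : HasDerivAt (fun s : ℝ => ((s, x) : ℝ × ℝ)) ((1 : ℝ), (0 : ℝ)) t :=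
      (hasDerivAt_id t).prodMk (hasDerivAt_const t x)
    have hc : HasDerivAt (fun s : ℝ => fderiv ℝ (F2 u) (s, x))
        (fderiv ℝ (fderiv ℝ (F2 u)) (t, x) (1, 0)) t :=
      ((hd (t, x)).hasFDerivAt).comp_hasDerivAt t hγ
    have := (hc.clm_apply (hasDerivAt_const t ((0 : ℝ), (1 : ℝ)))).deriv
    simpa [Dt, heq] using this
  have h2 : Dx (Dt u) t x = fderiv ℝ (fderiv ℝ (F2 u)) (t, x) (0, 1) (1, 0) := by
    have heq : (fun y => Dt u t y) = fun y => fderiv ℝ (F2 u) (t, y) (1, 0) :=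
      funext fun y => h.dt_eq t y
    have hγ : HasDerivAt (fun y : ℝ => ((t, y) : ℝ × ℝ)) ((0 : ℝ), (1 : ℝ)) x :=
      (hasDerivAt_const x t).prodMk (hasDerivAt_id x)
    have hc : HasDerivAt (fun y : ℝ => fderiv ℝ (F2 u) (t, y))
        (fderiv ℝ (fderiv ℝ (F2 u)) (t, x) (0, 1)) x :=
      ((hd (t, x)).hasFDerivAt).comp_hasDerivAt x hγ
    have := (hc.clm_apply (hasDerivAt_const x ((1 : ℝ), (0 : ℝ)))).deriv
    simpa [Dx, heq] using this
  rw [h1, h2, hsymm (1, 0) (0, 1)]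

end Smooth2

set_option maxHeartbeats 4000000 in
theorem stmt_11 (A B C : ℝ → ℝ → ℝ) (hA : Smooth2 A) (hB : Smooth2 B) (hC : Smooth2 C)
    (Ψ1 Ψ0 : ℝ → ℝ → ℝ) (hΨ1 : Smooth2 Ψ1) (hΨ0 : Smooth2 Ψ0)
    (hΨ1sol : ∀ t x, Dt Ψ1 t x = A t x * Dx (Dx Ψ1) t x + B t x * Dx Ψ1 t x + C t x * Ψ1 t x)
    (hΨ0sol : ∀ t x, Dt Ψ0 t x = A t x * Dx (Dx Ψ0) t x + B t x * Dx Ψ0 t x + C t x * Ψ0 t x)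
    (hΨ10 : ∀ t x, Ψ1 t x ≠ 0)
    (η1 η0 : ℝ → ℝ → ℝ)
    (hη1 : ∀ t x, η1 t x = Dx Ψ1 t x / Ψ1 t x)
    (hη0 : ∀ t x, η0 t x = Dx Ψ0 t x - Dx Ψ1 t x / Ψ1 t x * Ψ0 t x) :
    ∀ t x,
      (Dt η1 t x = Dx (fun t x =>
        A t x * Dx η1 t x + A t x * (η1 t x) ^ 2 + B t x * η1 t x + C t x) t x) ∧
      (Dt η0 t x = A t x * (Dx (Dx η0) t x + 2 * η0 t x * Dx η1 t x)
        + Dx A t x * (Dx η0 t x + η0 t x * η1 t x)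
        + Dx (fun t x => B t x * η0 t x) t x + C t x * η0 t x) := by
  have hη1f : η1 = fun t x => Dx Ψ1 t x / Ψ1 t x :=
    funext fun t => funext fun x => hη1 t x
  have hη0f : η0 = fun t x => Dx Ψ0 t x - Dx Ψ1 t x / Ψ1 t x * Ψ0 t x :=
    funext fun t => funext fun x => hη0 t x
  have hDtΨ1f : Dt Ψ1 = fun t x => A t x * Dx (Dx Ψ1) t x + B t x * Dx Ψ1 t x + C t x * Ψ1 t x :=
    funext fun t => funext fun x => hΨ1sol t x
  have hDtΨ0f : Dt Ψ0 = fun t x => A t x * Dx (Dx Ψ0) t x + B t x * Dx Ψ0 t x + C t x * Ψ0 t x :=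
    funext fun t => funext fun x => hΨ0sol t x
  have hP1x := hΨ1.dx_s11
  have hP1xx := hP1x.dx_s11
  have hP0x := hΨ0.dx_s11
  have hP0xx := hP0x.dx_s11
  -- pointwise first x-derivatives of η1 and η0
  have hDxη1 : ∀ t x, Dx η1 t x =
      (Dx (Dx Ψ1) t x * Ψ1 t x - Dx Ψ1 t x * Dx Ψ1 t x) / Ψ1 t x ^ 2 := by
    intro t x
    rw [hη1f]
    exact ((hP1x.hasDerivAt_x t x).div (hΨ1.hasDerivAt_x t x) (hΨ10 t x)).deriv
  have hDxη0 : ∀ t x, Dx η0 t x = Dx (Dx Ψ0) t x -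
      ((Dx (Dx Ψ1) t x * Ψ1 t x - Dx Ψ1 t x * Dx Ψ1 t x) / Ψ1 t x ^ 2 * Ψ0 t x
        + Dx Ψ1 t x / Ψ1 t x * Dx Ψ0 t x) := by
    intro t x
    rw [hη0f]
    exact ((hP0x.hasDerivAt_x t x).sub
      (((hP1x.hasDerivAt_x t x).div (hΨ1.hasDerivAt_x t x) (hΨ10 t x)).mul
        (hΨ0.hasDerivAt_x t x))).deriv
  -- single-fraction form of Dx η0
  have hDxη0f : Dx η0 = fun t x =>
      (Dx (Dx Ψ0) t x * (Ψ1 t x * Ψ1 t x)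
        - (Dx (Dx Ψ1) t x * Ψ1 t x - Dx Ψ1 t x * Dx Ψ1 t x) * Ψ0 t x
        - Dx Ψ1 t x * Ψ1 t x * Dx Ψ0 t x) / (Ψ1 t x * Ψ1 t x) := by
    funext t x
    rw [hDxη0 t x]
    have h0 := hΨ10 t x
    field_simp
    ring
  intro t x
  have h0 : Ψ1 t x ≠ 0 := hΨ10 t x
  constructor
  · -- first equation
    have hL : Dt η1 t x =
        (Dt (Dx Ψ1) t x * Ψ1 t x - Dx Ψ1 t x * Dt Ψ1 t x) / Ψ1 t x ^ 2 := by
      rw [hη1f]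
      exact ((hP1x.hasDerivAt_t t x).div (hΨ1.hasDerivAt_t t x) h0).deriv
    have hMix : Dt (Dx Ψ1) t x = Dx (Dt Ψ1) t x := hΨ1.clairaut t x
    have hDtx1 : Dx (Dt Ψ1) t x =
        (Dx A t x * Dx (Dx Ψ1) t x + A t x * Dx (Dx (Dx Ψ1)) t x
          + (Dx B t x * Dx Ψ1 t x + B t x * Dx (Dx Ψ1) t x))
          + (Dx C t x * Ψ1 t x + C t x * Dx Ψ1 t x) := by
      rw [hDtΨ1f]
      exact ((((hA.hasDerivAt_x t x).mul (hP1xx.hasDerivAt_x t x)).add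
        ((hB.hasDerivAt_x t x).mul (hP1x.hasDerivAt_x t x))).add
        ((hC.hasDerivAt_x t x).mul (hΨ1.hasDerivAt_x t x))).deriv
    have hGf : (fun t x =>
        A t x * Dx η1 t x + A t x * (η1 t x) ^ 2 + B t x * η1 t x + C t x) = fun t x =>
        (A t x * (Dx (Dx Ψ1) t x * Ψ1 t x - Dx Ψ1 t x * Dx Ψ1 t x)
          + A t x * (Dx Ψ1 t x * Dx Ψ1 t x)
          + B t x * (Dx Ψ1 t x * Ψ1 t x)
          + C t x * (Ψ1 t x * Ψ1 t x)) / (Ψ1 t x * Ψ1 t x) := by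
      funext t x
      rw [hDxη1 t x, hη1 t x]
      have h0 := hΨ10 t x
      field_simp
    rw [hGf, hL, hMix, hDtx1, hΨ1sol t x]
    symm
    have HP := hΨ1.hasDerivAt_x t x
    have Hpx := hP1x.hasDerivAt_x t x
    have Hpxx := hP1xx.hasDerivAt_x t x
    have HA := hA.hasDerivAt_x t x
    have HB := hB.hasDerivAt_x t x
    have HC := hC.hasDerivAt_x t x
    have num := (((HA.mul ((Hpxx.mul HP).sub (Hpx.mul Hpx))).add
      (HA.mul (Hpx.mul Hpx))).add (HB.mul (Hpx.mul HP))).add (HC.mul (HP.mul HP))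
    have chain := num.div (HP.mul HP) (mul_ne_zero h0 h0)
    exact (hasDerivAt_value_congr chain (by simp only [Pi.mul_apply, Pi.sub_apply, Pi.add_apply, Pi.pow_apply, Pi.neg_apply]; field_simp; ring)).deriv
  · -- second equation
    have hL0 : Dt η0 t x = Dt (Dx Ψ0) t x -
        ((Dt (Dx Ψ1) t x * Ψ1 t x - Dx Ψ1 t x * Dt Ψ1 t x) / Ψ1 t x ^ 2 * Ψ0 t x
          + Dx Ψ1 t x / Ψ1 t x * Dt Ψ0 t x) := by
      rw [hη0f]
      exact ((hP0x.hasDerivAt_t t x).sub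
        (((hP1x.hasDerivAt_t t x).div (hΨ1.hasDerivAt_t t x) h0).mul
          (hΨ0.hasDerivAt_t t x))).deriv
    have hMix : Dt (Dx Ψ1) t x = Dx (Dt Ψ1) t x := hΨ1.clairaut t x
    have hMix0 : Dt (Dx Ψ0) t x = Dx (Dt Ψ0) t x := hΨ0.clairaut t x
    have hDtx1 : Dx (Dt Ψ1) t x =
        (Dx A t x * Dx (Dx Ψ1) t x + A t x * Dx (Dx (Dx Ψ1)) t x
          + (Dx B t x * Dx Ψ1 t x + B t x * Dx (Dx Ψ1) t x))
          + (Dx C t x * Ψ1 t x + C t x * Dx Ψ1 t x) := by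
      rw [hDtΨ1f]
      exact ((((hA.hasDerivAt_x t x).mul (hP1xx.hasDerivAt_x t x)).add
        ((hB.hasDerivAt_x t x).mul (hP1x.hasDerivAt_x t x))).add
        ((hC.hasDerivAt_x t x).mul (hΨ1.hasDerivAt_x t x))).deriv
    have hDtx0 : Dx (Dt Ψ0) t x =
        (Dx A t x * Dx (Dx Ψ0) t x + A t x * Dx (Dx (Dx Ψ0)) t x
          + (Dx B t x * Dx Ψ0 t x + B t x * Dx (Dx Ψ0) t x))
          + (Dx C t x * Ψ0 t x + C t x * Dx Ψ0 t x) := by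
      rw [hDtΨ0f]
      exact ((((hA.hasDerivAt_x t x).mul (hP0xx.hasDerivAt_x t x)).add
        ((hB.hasDerivAt_x t x).mul (hP0x.hasDerivAt_x t x))).add
        ((hC.hasDerivAt_x t x).mul (hΨ0.hasDerivAt_x t x))).deriv
    -- second x-derivative of η0
    have hDxxη0 : Dx (Dx η0) t x =
        Dx (Dx (Dx Ψ0)) t x
          - (Dx (Dx (Dx Ψ1)) t x / Ψ1 t x
              - 3 * Dx Ψ1 t x * Dx (Dx Ψ1) t x / Ψ1 t x ^ 2
              + 2 * Dx Ψ1 t x ^ 3 / Ψ1 t x ^ 3) * Ψ0 t x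
          - 2 * (Dx (Dx Ψ1) t x / Ψ1 t x - Dx Ψ1 t x ^ 2 / Ψ1 t x ^ 2) * Dx Ψ0 t x
          - Dx Ψ1 t x / Ψ1 t x * Dx (Dx Ψ0) t x := by
      rw [hDxη0f]
      have HP := hΨ1.hasDerivAt_x t x
      have Hpx := hP1x.hasDerivAt_x t x
      have Hpxx := hP1xx.hasDerivAt_x t x
      have HQ := hΨ0.hasDerivAt_x t x
      have Hqx := hP0x.hasDerivAt_x t x
      have Hqxx := hP0xx.hasDerivAt_x t x
      have num := ((Hqxx.mul (HP.mul HP)).sub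
        (((Hpxx.mul HP).sub (Hpx.mul Hpx)).mul HQ)).sub ((Hpx.mul HP).mul Hqx)
      have chain := num.div (HP.mul HP) (mul_ne_zero h0 h0)
      exact (hasDerivAt_value_congr chain (by simp only [Pi.mul_apply, Pi.sub_apply, Pi.add_apply, Pi.pow_apply, Pi.neg_apply]; field_simp; ring)).deriv
    -- x-derivative of B * η0
    have hDxBη0 : Dx (fun t x => B t x * η0 t x) t x =
        Dx B t x * (Dx Ψ0 t x - Dx Ψ1 t x / Ψ1 t x * Ψ0 t x)
          + B t x * (Dx (Dx Ψ0) t x -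
            ((Dx (Dx Ψ1) t x * Ψ1 t x - Dx Ψ1 t x * Dx Ψ1 t x) / Ψ1 t x ^ 2 * Ψ0 t x
              + Dx Ψ1 t x / Ψ1 t x * Dx Ψ0 t x)) := by
      rw [show (fun t x => B t x * η0 t x) =
          (fun t x => B t x * (Dx Ψ0 t x - Dx Ψ1 t x / Ψ1 t x * Ψ0 t x)) from by
        rw [hη0f]]
      exact ((hB.hasDerivAt_x t x).mul
        ((hP0x.hasDerivAt_x t x).sub
          (((hP1x.hasDerivAt_x t x).div (hΨ1.hasDerivAt_x t x) h0).mul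
            (hΨ0.hasDerivAt_x t x)))).deriv
    rw [hL0, hMix, hMix0, hDtx1, hDtx0, hΨ1sol t x, hΨ0sol t x, hDxxη0, hDxη0 t x,
      hDxη1 t x, hDxBη0, hη0 t x, hη1 t x]
    field_simp
    ring
end

section
/- Let h : ℝ → ℝ be smooth, let κ, c₁ ∈ ℝ, and let H be a differentiable function on {t ∈ ℝ : 2t + κ ≠ 0} with H'(t) = (h(t)+1)/(2t+κ). Then the function u(t,x) := c₁·exp(−x²/(2(2t+κ)) − H(t)) satisfies u_t = u_{xx} + (h(t)/x)u_x for all x ≠ 0 and all t with 2t + κ ≠ 0. -/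
theorem stmt_15 (h : ℝ → ℝ) (hh : ContDiff ℝ (⊤ : ℕ∞) h) (κ c1 : ℝ)
    (H : ℝ → ℝ) (hH : ∀ t : ℝ, 2 * t + κ ≠ 0 → HasDerivAt H ((h t + 1) / (2 * t + κ)) t)
    (u : ℝ → ℝ → ℝ)
    (hu : ∀ t x, u t x = c1 * Real.exp (- x ^ 2 / (2 * (2 * t + κ)) - H t)) :
    ∀ t : ℝ, ∀ x : ℝ, x ≠ 0 → 2 * t + κ ≠ 0 →
      Dt u t x = Dx (Dx u) t x + h t / x * Dx u t x := by
  intro t x hx hst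
  set s := 2 * t + κ with hsdef
  -- first space derivative, as a HasDerivAt, for every y
  have hexp : ∀ y : ℝ, HasDerivAt (fun y : ℝ => c1 * Real.exp (- y ^ 2 / (2 * s) - H t))
      (c1 * Real.exp (- y ^ 2 / (2 * s) - H t) * (-y / s)) y := by
    intro y
    have h1 : HasDerivAt (fun y : ℝ => - y ^ 2 / (2 * s) - H t) (-y / s) y := by
      have h0 := ((hasDerivAt_pow 2 y).neg.div_const (2 * s)).sub_const (H t)
      refine h0.congr_deriv ?_
      field_simp
      ring
    have h2 := h1.exp.const_mul c1
    refine h2.congr_deriv ?_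
    ring
  have hdx : ∀ y : ℝ, HasDerivAt (fun y => u t y)
      (c1 * Real.exp (- y ^ 2 / (2 * s) - H t) * (-y / s)) y := by
    intro y
    have heq : (fun y => u t y) = fun y : ℝ => c1 * Real.exp (- y ^ 2 / (2 * s) - H t) := by
      funext y; rw [hu]
    rw [heq]
    exact hexp y
  have hDx : ∀ y : ℝ, Dx u t y = c1 * Real.exp (- y ^ 2 / (2 * s) - H t) * (-y / s) :=
    fun y => (hdx y).deriv
  -- second space derivative
  have hdxx : HasDerivAt (fun y => Dx u t y)
      (c1 * Real.exp (- x ^ 2 / (2 * s) - H t) * (-x / s) * (-x / s)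
        + c1 * Real.exp (- x ^ 2 / (2 * s) - H t) * (-1 / s)) x := by
    have h2 : HasDerivAt (fun y : ℝ => -y / s) (-1 / s) x := by
      simpa using (hasDerivAt_id x).neg.div_const s
    have h3 := (hexp x).mul h2
    have heq : (fun y => Dx u t y)
        = fun y : ℝ => (c1 * Real.exp (- y ^ 2 / (2 * s) - H t)) * (-y / s) := by
      funext y; rw [hDx y]
    rw [heq]
    exact h3
  -- time derivative
  have hdt : HasDerivAt (fun r => u r x)
      (c1 * Real.exp (- x ^ 2 / (2 * s) - H t) * (x ^ 2 / s ^ 2 - (h t + 1) / s)) t := by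
    have hf : HasDerivAt (fun r : ℝ => 2 * (2 * r + κ)) 4 t := by
      have h0 : HasDerivAt (fun r : ℝ => 2 * (2 * r + κ)) (2 * (2 * 1)) t :=
        (((hasDerivAt_id t).const_mul 2).add_const κ).const_mul 2
      norm_num at h0
      exact h0
    have hfne : 2 * (2 * t + κ) ≠ 0 := by
      rw [← hsdef]
      exact mul_ne_zero two_ne_zero hst
    have hq : HasDerivAt (fun r : ℝ => - x ^ 2 / (2 * (2 * r + κ))) (x ^ 2 / s ^ 2) t := by
      have h0 := (hasDerivAt_const t (- x ^ 2)).div hf hfne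
      refine h0.congr_deriv ?_
      rw [← hsdef]
      field_simp
      ring
    have h1 := (hq.sub (hH t hst)).exp.const_mul c1
    have heq : (fun r => u r x) = fun r : ℝ => c1 * Real.exp (- x ^ 2 / (2 * (2 * r + κ)) - H r) := by
      funext r; rw [hu]
    rw [heq]
    refine h1.congr_deriv ?_
    simp only [Pi.sub_apply]
    rw [← hsdef]
    ring
  -- put it together
  have e1 : Dt u t x = c1 * Real.exp (- x ^ 2 / (2 * s) - H t) * (x ^ 2 / s ^ 2 - (h t + 1) / s) :=
    hdt.deriv
  have e2 : Dx (Dx u) t x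
      = c1 * Real.exp (- x ^ 2 / (2 * s) - H t) * (-x / s) * (-x / s)
        + c1 * Real.exp (- x ^ 2 / (2 * s) - H t) * (-1 / s) := hdxx.deriv
  rw [e1, e2, hDx x]
  field_simp
  ring
end

section
/- Let h : ℝ → ℝ be smooth and κ ∈ ℝ. Then the function η(t,x,u) := −xu/(2t+κ) satisfies the determining equation η_t = η_{xx} + 2ηη_{xu} + η²η_{uu} + B_xη + Bη_x with B(t,x) = h(t)/x, for all u, all x ≠ 0 and all t with 2t + κ ≠ 0. Thus the operator G_κ = (2t+κ)∂_x − xu∂_u is a reduction (nonclassical symmetry) operator of every linear transfer equation u_t = u_{xx} + (h(t)/x)u_x, independently of the choice of h. -/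
theorem stmt_16 (h : ℝ → ℝ) (hh : ContDiff ℝ (⊤ : ℕ∞) h) (κ : ℝ)
    (B : ℝ → ℝ → ℝ) (hB : ∀ t x, B t x = h t / x)
    (η : ℝ → ℝ → ℝ → ℝ)
    (hη : ∀ t x v, η t x v = - x * v / (2 * t + κ)) :
    ∀ t : ℝ, ∀ x : ℝ, ∀ v : ℝ, x ≠ 0 → 2 * t + κ ≠ 0 →
      Et η t x v = Ex (Ex η) t x v + 2 * η t x v * Eu (Ex η) t x v
        + (η t x v) ^ 2 * Eu (Eu η) t x v
        + Dx B t x * η t x v + B t x * Ex η t x v := by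
  intro t x v hx hc
  -- first-order x-derivative of η
  have hEx : ∀ t' x' v', Ex η t' x' v' = -(v' / (2 * t' + κ)) := by
    intro t' x' v'
    have hfun : (fun y => η t' y v') = fun y => -y * v' / (2 * t' + κ) :=
      funext fun y => hη t' y v'
    have hd : HasDerivAt (fun y : ℝ => -y * v' / (2 * t' + κ))
        ((-1) * v' / (2 * t' + κ)) x' :=
      (((hasDerivAt_id x').neg).mul_const v').div_const _
    rw [Ex, hfun, hd.deriv]; ring
  -- first-order u-derivative of η
  have hEu : ∀ t' x' v', Eu η t' x' v' = -(x' / (2 * t' + κ)) := by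
    intro t' x' v'
    have hfun : (fun w => η t' x' w) = fun w => -x' * w / (2 * t' + κ) :=
      funext fun w => hη t' x' w
    have hd : HasDerivAt (fun w : ℝ => -x' * w / (2 * t' + κ))
        ((-x') * 1 / (2 * t' + κ)) v' :=
      ((hasDerivAt_id v').const_mul (-x')).div_const _
    rw [Eu, hfun, hd.deriv]; ring
  -- second derivatives
  have hExEx : Ex (Ex η) t x v = 0 := by
    have hfun : (fun y => Ex η t y v) = fun _ => -(v / (2 * t + κ)) :=
      funext fun y => hEx t y v
    rw [Ex, hfun, deriv_const]
  have hEuEx : Eu (Ex η) t x v = -(1 / (2 * t + κ)) := by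
    have hfun : (fun w => Ex η t x w) = fun w => -(w / (2 * t + κ)) :=
      funext fun w => hEx t x w
    have hd : HasDerivAt (fun w : ℝ => -(w / (2 * t + κ)))
        (-(1 / (2 * t + κ))) v := ((hasDerivAt_id v).div_const _).neg
    rw [Eu, hfun, hd.deriv]
  have hEuEu : Eu (Eu η) t x v = 0 := by
    have hfun : (fun w => Eu η t x w) = fun _ => -(x / (2 * t + κ)) :=
      funext fun w => hEu t x w
    rw [Eu, hfun, deriv_const]
  -- t-derivative
  have hEt : Et η t x v = (0 * (2 * t + κ) - (-x * v) * 2) / (2 * t + κ) ^ 2 := by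
    have hfun : (fun s => η s x v) = fun s => -x * v / (2 * s + κ) :=
      funext fun s => hη s x v
    have hden : HasDerivAt (fun s : ℝ => 2 * s + κ) 2 t := by
      simpa using ((hasDerivAt_id t).const_mul 2).add_const κ
    have hd : HasDerivAt (fun s : ℝ => -x * v / (2 * s + κ))
        ((0 * (2 * t + κ) - (-x * v) * 2) / (2 * t + κ) ^ 2) t :=
      (hasDerivAt_const t (-x * v)).div hden hc
    rw [Et, hfun, hd.deriv]
  -- x-derivative of B
  have hDxB : Dx B t x = (0 * x - h t * 1) / x ^ 2 := by
    have hfun : (fun y => B t y) = fun y => h t / y := funext fun y => hB t y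
    have hd : HasDerivAt (fun y : ℝ => h t / y)
        ((0 * x - h t * 1) / x ^ 2) x :=
      (hasDerivAt_const x (h t)).div (hasDerivAt_id x) hx
    rw [Dx, hfun, hd.deriv]
  rw [hEt, hExEx, hEuEx, hEuEu, hDxB, hEx, hη, hB]
  field_simp
  ring
end

section
/- Let h : ℝ → ℝ be smooth, κ ∈ ℝ, N ∈ ℕ. Let H and S⁰, …, S^N be differentiable functions on {t ∈ ℝ : 2t + κ ≠ 0} with H'(t) = (h(t)+1)/(2t+κ), (S^k)'(t) = 2(k+1)(h(t)+2k+1)(2t+κ)^{-2}·S^{k+1}(t) for k = 0, …, N−1, and (S^N)'(t) = 0. Then the function u(t,x) := [Σ_{k=0}^{N} S^k(t)·(x/(2t+κ))^{2k}]·exp(−x²/(2(2t+κ)) − H(t)) satisfies u_t = u_{xx} + (h(t)/x)u_x for all x ≠ 0 and all t with 2t + κ ≠ 0. -/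
set_option maxHeartbeats 2000000 in
theorem stmt_18 (h : ℝ → ℝ) (hh : ContDiff ℝ (⊤ : ℕ∞) h) (κ : ℝ) (N : ℕ)
    (H : ℝ → ℝ) (S : ℕ → ℝ → ℝ)
    (hH : ∀ t : ℝ, 2 * t + κ ≠ 0 → HasDerivAt H ((h t + 1) / (2 * t + κ)) t)
    (hS : ∀ k, k < N → ∀ t : ℝ, 2 * t + κ ≠ 0 →
      HasDerivAt (S k)
        (2 * ((k : ℝ) + 1) * (h t + 2 * (k : ℝ) + 1) * (2 * t + κ) ^ (-2 : ℤ) * S (k + 1) t) t)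
    (hSN : ∀ t : ℝ, 2 * t + κ ≠ 0 → HasDerivAt (S N) 0 t)
    (u : ℝ → ℝ → ℝ)
    (hu : ∀ t x, u t x =
      (∑ k ∈ Finset.range (N + 1), S k t * (x / (2 * t + κ)) ^ (2 * k)) *
        Real.exp (- x ^ 2 / (2 * (2 * t + κ)) - H t)) :
    ∀ t : ℝ, ∀ x : ℝ, x ≠ 0 → 2 * t + κ ≠ 0 →
      Dt u t x = Dx (Dx u) t x + h t / x * Dx u t x := by
  obtain rfl : u = fun t x =>
      (∑ k ∈ Finset.range (N + 1), S k t * (x / (2 * t + κ)) ^ (2 * k)) *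
        Real.exp (- x ^ 2 / (2 * (2 * t + κ)) - H t) :=
    funext fun t => funext fun x => hu t x
  intro t x hx hc
  have h2c : (2:ℝ) * (2*t+κ) ≠ 0 := mul_ne_zero two_ne_zero hc
  -- time derivative pieces
  have hlin : HasDerivAt (fun s : ℝ => 2*s+κ) 2 t := by
    simpa using ((hasDerivAt_id t).const_mul 2).add_const κ
  have hdiv : HasDerivAt (fun s : ℝ => x/(2*s+κ)) (-(2*x)/(2*t+κ)^2) t := by
    have h0 := (hasDerivAt_const t x).div hlin hc
    refine h0.congr_deriv ?_
    ring
  have hpowt : ∀ k : ℕ, HasDerivAt (fun s : ℝ => (x/(2*s+κ))^(2*k))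
      ((2*k : ℕ) * (x/(2*t+κ))^(2*k-1) * (-(2*x)/(2*t+κ)^2)) t := fun k => hdiv.pow _
  have hSk : ∀ k ∈ Finset.range (N+1), HasDerivAt (S k)
      (if k = N then (0:ℝ) else 2*((k:ℝ)+1)*(h t+2*(k:ℝ)+1)*(2*t+κ)^(-2:ℤ)*S (k+1) t) t := by
    intro k hk
    by_cases hkN : k = N
    · simpa [hkN] using hSN t hc
    · have hkN' : k < N := lt_of_le_of_ne (Nat.lt_succ_iff.mp (Finset.mem_range.mp hk)) hkN
      simpa [hkN] using hS k hkN' t hc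
  have hsum_t : HasDerivAt (fun s => ∑ k ∈ Finset.range (N+1), S k s * (x/(2*s+κ))^(2*k))
      (∑ k ∈ Finset.range (N+1),
        ((if k = N then (0:ℝ) else 2*((k:ℝ)+1)*(h t+2*(k:ℝ)+1)*(2*t+κ)^(-2:ℤ)*S (k+1) t)
            * (x/(2*t+κ))^(2*k)
          + S k t * ((2*k : ℕ) * (x/(2*t+κ))^(2*k-1) * (-(2*x)/(2*t+κ)^2)))) t :=
    HasDerivAt.fun_sum fun k hk => (hSk k hk).mul (hpowt k)
  have hden : HasDerivAt (fun s : ℝ => 2*(2*s+κ)) 4 t := by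
    have := hlin.const_mul (2:ℝ)
    refine this.congr_deriv ?_
    norm_num
  have hfrac : HasDerivAt (fun s : ℝ => -x^2/(2*(2*s+κ))) (x^2/(2*t+κ)^2) t := by
    have h0 := (hasDerivAt_const t (-x^2)).div hden h2c
    refine h0.congr_deriv ?_
    field_simp
    ring
  have hexp_t : HasDerivAt (fun s : ℝ => Real.exp (-x^2/(2*(2*s+κ)) - H s))
      (Real.exp (-x^2/(2*(2*t+κ)) - H t) * (x^2/(2*t+κ)^2 - (h t + 1)/(2*t+κ))) t :=
    (hfrac.sub (hH t hc)).exp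
  have hDt := (hsum_t.mul hexp_t).deriv
  -- space derivative pieces
  have hpx : ∀ (n : ℕ) (y : ℝ), HasDerivAt (fun z : ℝ => (z/(2*t+κ))^n)
      ((n:ℝ) * (y/(2*t+κ))^(n-1) * (1/(2*t+κ))) y := by
    intro n y
    have h1 : HasDerivAt (fun z : ℝ => z/(2*t+κ)) (1/(2*t+κ)) y :=
      (hasDerivAt_id y).div_const (2*t+κ)
    exact h1.pow n
  have hPy : ∀ y : ℝ, HasDerivAt (fun z => ∑ k ∈ Finset.range (N+1), S k t * (z/(2*t+κ))^(2*k))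
      (∑ k ∈ Finset.range (N+1), S k t * ((2*k:ℕ) * (y/(2*t+κ))^(2*k-1) * (1/(2*t+κ)))) y :=
    fun y => HasDerivAt.fun_sum fun k _ => (hpx (2*k) y).const_mul (S k t)
  have hEy : ∀ y : ℝ, HasDerivAt (fun z : ℝ => Real.exp (-z^2/(2*(2*t+κ)) - H t))
      (Real.exp (-y^2/(2*(2*t+κ)) - H t) * (-(2*y)/(2*(2*t+κ)))) y := by
    intro y
    have h1 : HasDerivAt (fun z : ℝ => -z^2/(2*(2*t+κ)) - H t) (-(2*y)/(2*(2*t+κ))) y := by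
      have h0 := ((hasDerivAt_pow 2 y).neg.div_const (2*(2*t+κ))).sub_const (H t)
      refine h0.congr_deriv ?_
      norm_num
    exact h1.exp
  have hgy : ∀ y : ℝ, HasDerivAt
      (fun z => (∑ k ∈ Finset.range (N+1), S k t * (z/(2*t+κ))^(2*k)) *
        Real.exp (-z^2/(2*(2*t+κ)) - H t))
      ((∑ k ∈ Finset.range (N+1), S k t * ((2*k:ℕ) * (y/(2*t+κ))^(2*k-1) * (1/(2*t+κ)))) *
          Real.exp (-y^2/(2*(2*t+κ)) - H t)
        + (∑ k ∈ Finset.range (N+1), S k t * (y/(2*t+κ))^(2*k)) *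
          (Real.exp (-y^2/(2*(2*t+κ)) - H t) * (-(2*y)/(2*(2*t+κ))))) y :=
    fun y => (hPy y).mul (hEy y)
  have hQy : HasDerivAt
      (fun y : ℝ => ∑ k ∈ Finset.range (N+1), S k t * ((2*k:ℕ) * (y/(2*t+κ))^(2*k-1) * (1/(2*t+κ))))
      (∑ k ∈ Finset.range (N+1), S k t *
        ((2*k:ℕ) * (((2*k-1 : ℕ):ℝ) * (x/(2*t+κ))^(2*k-1-1) * (1/(2*t+κ))) * (1/(2*t+κ)))) x :=
    HasDerivAt.fun_sum fun k _ =>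
      (((hpx (2*k-1) x).const_mul ((2*k:ℕ):ℝ)).mul_const (1/(2*t+κ))).const_mul (S k t)
  have hL : HasDerivAt (fun y : ℝ => -(2*y)/(2*(2*t+κ))) (-2/(2*(2*t+κ))) x := by
    have h0 := (((hasDerivAt_id x).const_mul (2:ℝ)).neg).div_const (2*(2*t+κ))
    refine h0.congr_deriv ?_
    norm_num
  have hg2 := ((hQy.mul (hEy x)).add ((hPy x).mul ((hEy x).mul hL))).deriv
  -- rewrite goal
  simp only [Dt, Dx]
  have e1 : (fun y : ℝ => deriv (fun z =>
      (∑ k ∈ Finset.range (N+1), S k t * (z/(2*t+κ))^(2*k)) *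
        Real.exp (-z^2/(2*(2*t+κ)) - H t)) y) =
      (fun y : ℝ =>
        (∑ k ∈ Finset.range (N+1), S k t * ((2*k:ℕ) * (y/(2*t+κ))^(2*k-1) * (1/(2*t+κ)))) *
          Real.exp (-y^2/(2*(2*t+κ)) - H t)
        + (∑ k ∈ Finset.range (N+1), S k t * (y/(2*t+κ))^(2*k)) *
          (Real.exp (-y^2/(2*(2*t+κ)) - H t) * (-(2*y)/(2*(2*t+κ))))) :=
    funext fun y => (hgy y).deriv
  simp only [Pi.mul_def, Pi.add_def] at hg2 hDt
  rw [e1, hg2, hDt, (hgy x).deriv]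
  -- sum conversions
  have cQ : (∑ k ∈ Finset.range (N+1), S k t * ((2*k:ℕ) * (x/(2*t+κ))^(2*k-1) * (1/(2*t+κ))))
      = (∑ k ∈ Finset.range (N+1), 2*(k:ℝ) * S k t * (x/(2*t+κ))^(2*k)) / x := by
    rw [Finset.sum_div]
    refine Finset.sum_congr rfl fun k _ => ?_
    rcases k with _ | j
    · simp
    · have e : 2*(j+1) - 1 = 2*j+1 := by omega
      rw [e]
      push_cast
      simp only [div_pow]
      field_simp
      ring
  have cR : (∑ k ∈ Finset.range (N+1), S k t *
        ((2*k:ℕ) * (((2*k-1 : ℕ):ℝ) * (x/(2*t+κ))^(2*k-1-1) * (1/(2*t+κ))) * (1/(2*t+κ))))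
      = (∑ k ∈ Finset.range (N+1), 2*(k:ℝ)*(2*(k:ℝ)-1) * S k t * (x/(2*t+κ))^(2*k)) / x^2 := by
    rw [Finset.sum_div]
    refine Finset.sum_congr rfl fun k _ => ?_
    rcases k with _ | j
    · simp
    · have e : 2*(j+1) - 1 = 2*j+1 := by omega
      have e2 : 2*(j+1) - 1 - 1 = 2*j := by omega
      rw [e2, e]
      push_cast
      simp only [div_pow]
      field_simp
      ring
  have cB : (∑ k ∈ Finset.range (N+1), S k t *
        ((2*k:ℕ) * (x/(2*t+κ))^(2*k-1) * (-(2*x)/(2*t+κ)^2)))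
      = -(2/(2*t+κ)) * ∑ k ∈ Finset.range (N+1), 2*(k:ℝ) * S k t * (x/(2*t+κ))^(2*k) := by
    rw [Finset.mul_sum]
    refine Finset.sum_congr rfl fun k _ => ?_
    rcases k with _ | j
    · simp
    · have e : 2*(j+1) - 1 = 2*j+1 := by omega
      rw [e]
      push_cast
      simp only [div_pow]
      field_simp
      ring
  have key : (∑ k ∈ Finset.range (N+1),
        (if k = N then (0:ℝ) else 2*((k:ℝ)+1)*(h t+2*(k:ℝ)+1)*(2*t+κ)^(-2:ℤ)*S (k+1) t)
          * (x/(2*t+κ))^(2*k))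
      = ((∑ k ∈ Finset.range (N+1), 2*(k:ℝ)*(2*(k:ℝ)-1) * S k t * (x/(2*t+κ))^(2*k))
        + h t * ∑ k ∈ Finset.range (N+1), 2*(k:ℝ) * S k t * (x/(2*t+κ))^(2*k)) / x^2 := by
    simp only [zpow_neg, zpow_ofNat]
    rw [eq_div_iff (pow_ne_zero 2 hx), Finset.sum_mul, Finset.mul_sum,
      ← Finset.sum_add_distrib, Finset.sum_range_succ, Finset.sum_range_succ']
    norm_num
    refine Finset.sum_congr rfl fun k hk => ?_
    rw [if_neg (Finset.mem_range.mp hk).ne]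
    obtain ⟨T, hT, hT0⟩ : ∃ T : ℝ, 2*t+κ = T ∧ T ≠ 0 := ⟨_, rfl, hc⟩
    simp only [hT]
    rw [show 2*(k+1) = 2*k+2 from by omega, pow_add]
    generalize (x/T)^(2*k) = X
    push_cast
    field_simp
    ring
  rw [Finset.sum_add_distrib, key, cB, cQ, cR]
  obtain ⟨T, hT, hT0⟩ : ∃ T : ℝ, 2*t+κ = T ∧ T ≠ 0 := ⟨_, rfl, hc⟩
  simp only [hT]
  field_simp
  ring
end

section
/- Let A, B, C : ℝ² → ℝ be smooth with A nowhere zero, let v¹, v² be smooth solutions of v_t = Av_{xx} + Bv_x + Cv with W := v¹v²_x − v¹_xv² nowhere zero, and set g¹ := −A·W_x/W − B and g² := −A·W₁/W + C, where W₁ := v¹_xv²_{xx} − v¹_{xx}v²_x and W_x = v¹v²_{xx} − v¹_{xx}v². Then for every smooth solution u of u_t = Au_{xx} + Bu_x + Cu one has, at every point, u_t + g¹u_x − g²u = A·(u_{xx} − (W_x/W)u_x + (W₁/W)u); that is, on the solution set of the equation the first-order operator −∂_t − g¹∂_x + g² coincides with −A·DT[v¹,v²], where DT[v¹,v²] = ∂_{xx}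 − (W_x/W)∂_x + W₁/W is the second-order Darboux operator constructed with v¹ and v². -/
theorem stmt_19 (A B C : ℝ → ℝ → ℝ) (hA : Smooth2 A) (hB : Smooth2 B) (hC : Smooth2 C)
    (hA0 : ∀ t x, A t x ≠ 0)
    (v1 v2 : ℝ → ℝ → ℝ) (hv1 : Smooth2 v1) (hv2 : Smooth2 v2)
    (hv1sol : ∀ t x, Dt v1 t x = A t x * Dx (Dx v1) t x + B t x * Dx v1 t x + C t x * v1 t x)
    (hv2sol : ∀ t x, Dt v2 t x = A t x * Dx (Dx v2) t x + B t x * Dx v2 t x + C t x * v2 t x)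
    (W : ℝ → ℝ → ℝ) (hW : ∀ t x, W t x = v1 t x * Dx v2 t x - Dx v1 t x * v2 t x)
    (hW0 : ∀ t x, W t x ≠ 0)
    (Wx W1 : ℝ → ℝ → ℝ)
    (hWx : ∀ t x, Wx t x = v1 t x * Dx (Dx v2) t x - Dx (Dx v1) t x * v2 t x)
    (hW1 : ∀ t x, W1 t x = Dx v1 t x * Dx (Dx v2) t x - Dx (Dx v1) t x * Dx v2 t x)
    (g1 g2 : ℝ → ℝ → ℝ)
    (hg1 : ∀ t x, g1 t x = - A t x * Wx t x / W t x - B t x)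
    (hg2 : ∀ t x, g2 t x = - A t x * W1 t x / W t x + C t x) :
    ∀ u : ℝ → ℝ → ℝ, Smooth2 u →
      (∀ t x, Dt u t x = A t x * Dx (Dx u) t x + B t x * Dx u t x + C t x * u t x) →
      ∀ t x, Dt u t x + g1 t x * Dx u t x - g2 t x * u t x =
        A t x * (Dx (Dx u) t x - Wx t x / W t x * Dx u t x + W1 t x / W t x * u t x) := by
  intro u hu husol t x
  have h := husol t x
  rw [h, hg1, hg2]
  field_simp
  ring
end
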